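/- arXiv:1505.02597 — 10 statements merged into one kernel-verified Lean document; each statement's English description precedes it below -/
import Mathlib

section
/- If C ⊆ F^n is an s-frameproof code and L_1,...,L_s is a partition of {1,...,n} into s subsets, then C = U_{L_1} ∪ ... ∪ U_{L_s}, where U_L denotes the set of codewords in C uniquely determined among C by their components in positions L. -/
def desc {F : Type*} {n : ℕ} (X : Set (Fin n → F)) : Set (Fin n → F) :=
  {y | ∀ k : Fin n, ∃ x ∈ X, y k = x k}

theorem frameproof_union_of_uniquely_determined {F : Type*} [Fintype F] {n s : ℕ}
    (hn : 2 ≤ n) (hs : 1 ≤ s) (C : Set (Fin n → F))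
    (hfp : ∀ X : Finset (Fin n → F), ↑X ⊆ C → X.card ≤ s → desc ↑X ∩ C = ↑X)
    (L : Fin s → Finset (Fin n))
    (hdisj : ∀ i j : Fin s, i ≠ j → Disjoint (L i) (L j))
    (hcov : ∀ k : Fin n, ∃ i : Fin s, k ∈ L i) :
    C = ⋃ i : Fin s,
      {c ∈ C | ∀ c' ∈ C, (∀ k ∈ L i, c' k = c k) → c' = c} := by
  classical
  ext c
  simp only [Set.mem_iUnion, Set.mem_setOf_eq]
  constructor
  · intro hc
    by_contra h
    push_neg at h
    have h' : ∀ i : Fin s, ∃ c' , c' ∈ C ∧ (∀ k ∈ L i, c' k = c k) ∧ c' ≠ c := by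
      intro i
      obtain ⟨c', hc'C, hagree, hne⟩ := h i hc
      exact ⟨c', hc'C, hagree, hne⟩
    choose f hfC hfa hfne using h'
    set X : Finset (Fin n → F) := Finset.univ.image f with hX
    have hsub : ↑X ⊆ C := by
      intro x hx
      simp only [hX, Finset.coe_image, Set.mem_image] at hx
      obtain ⟨i, _, rfl⟩ := hx
      exact hfC i
    have hcard : X.card ≤ s := by
      calc X.card ≤ Finset.univ.card := Finset.card_image_le
        _ = s := by simp
    have hcmem : c ∈ desc (↑X : Set (Fin n → F)) ∩ C := by
      refine ⟨fun k => ?_, hc⟩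
      obtain ⟨i, hk⟩ := hcov k
      exact ⟨f i, by simp [hX], (hfa i k hk).symm⟩
    rw [hfp X hsub hcard] at hcmem
    simp only [hX, Finset.coe_image, Set.mem_image] at hcmem
    obtain ⟨i, _, hfi⟩ := hcmem
    exact hfne i hfi
  · rintro ⟨i, hcC, _⟩
    exact hcC
end

section
/- If C ⊆ F^n is an s-frameproof code with |F| = q, then |C| ≤ s · q^⌈n/s⌉. -/
theorem frameproof_card_bound {F : Type*} [Fintype F] {q n s : ℕ}
    (hq : 2 ≤ q) (hn : 2 ≤ n) (hs : 1 ≤ s) (hF : Fintype.card F = q)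
    (C : Finset (Fin n → F))
    (hfp : ∀ X : Finset (Fin n → F), X ⊆ C → X.card ≤ s →
      desc (X : Set (Fin n → F)) ∩ ↑C = ↑X) :
    C.card ≤ s * q ^ (⌈(n : ℚ) / s⌉₊) := by
  classical
  set t := ⌈(n : ℚ) / s⌉₊ with ht
  have hs0 : (0:ℚ) < (s:ℚ) := by exact_mod_cast hs
  have hst : n ≤ s * t := by
    have h1 : (n : ℚ) / s ≤ t := Nat.le_ceil _
    rw [div_le_iff₀ hs0] at h1
    have h2 : (n:ℚ) ≤ ((s*t : ℕ) : ℚ) := by push_cast; linarith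
    exact_mod_cast h2
  have ht0 : 0 < t := by
    rcases Nat.eq_zero_or_pos t with h | h
    · rw [h, Nat.mul_zero] at hst; omega
    · exact h
  have hNe : Nonempty F := by
    rw [← Fintype.card_pos_iff, hF]; omega
  let f0 : F := Classical.arbitrary F
  -- block assignment
  let β : Fin n → Fin s := fun k =>
    ⟨min ((k:ℕ) / t) (s-1), lt_of_le_of_lt (min_le_right _ _) (by omega)⟩
  have hblock : ∀ (k : Fin n) (i : Fin s), β k = i → ∃ j < t, (k:ℕ) = (i:ℕ)*t + j := by
    intro k i hki
    have hd := Nat.div_add_mod (k:ℕ) t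
    have hm : (k:ℕ) % t < t := Nat.mod_lt _ ht0
    have hi : (i:ℕ) = min ((k:ℕ)/t) (s-1) := by rw [← hki]
    rcases le_or_gt ((k:ℕ)/t) (s-1) with h | h
    · refine ⟨(k:ℕ) % t, hm, ?_⟩
      have hie : (i:ℕ) = (k:ℕ)/t := by rw [hi, min_eq_left h]
      rw [hie, Nat.mul_comm]
      linarith
    · have hie : (i:ℕ) = s - 1 := by rw [hi, min_eq_right h.le]
      have h1 : (s-1)*t ≤ (k:ℕ) :=
        le_trans (Nat.mul_le_mul_right t h.le) (Nat.div_mul_le_self _ _)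
      have h2 : s*t = (s-1)*t + t := by
        obtain ⟨s', rfl⟩ : ∃ s', s = s' + 1 := ⟨s-1, by omega⟩
        simp [Nat.succ_mul]
      have hk : (k:ℕ) < n := k.isLt
      refine ⟨(k:ℕ) - (s-1)*t, by omega, ?_⟩
      rw [hie]
      omega
  -- the "unique on block i" subsets
  let Ci : Fin s → Finset (Fin n → F) := fun i =>
    C.filter (fun c => ∀ x ∈ C, (∀ k, β k = i → x k = c k) → x = c)
  have hcover : C ⊆ Finset.univ.biUnion Ci := by
    intro c hc
    by_contra hnc
    have hex : ∀ i : Fin s, ∃ x, x ∈ C ∧ (∀ k, β k = i → x k = c k) ∧ x ≠ c := by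
      intro i
      have hciu : c ∉ Ci i := fun h =>
        hnc (Finset.mem_biUnion.mpr ⟨i, Finset.mem_univ _, h⟩)
      simp only [Ci, Finset.mem_filter, not_and] at hciu
      have := hciu hc
      push_neg at this
      obtain ⟨x, hx1, hx2, hx3⟩ := this
      exact ⟨x, hx1, hx2, hx3⟩
    choose x hxC hxa hxne using hex
    set X := Finset.image x Finset.univ with hX
    have hXC : X ⊆ C := by
      intro y hy
      simp only [hX, Finset.mem_image, Finset.mem_univ, true_and] at hy
      obtain ⟨i, rfl⟩ := hy
      exact hxC i
    have hXs : X.card ≤ s := le_trans Finset.card_image_le (by simp)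
    have hdesc : c ∈ desc (X : Set (Fin n → F)) := by
      intro k
      refine ⟨x (β k), ?_, (hxa (β k) k rfl).symm⟩
      simp [hX]
    have hcX : c ∈ (X : Set (Fin n → F)) := by
      rw [← hfp X hXC hXs]; exact ⟨hdesc, hc⟩
    simp only [hX, Finset.coe_image, Set.mem_image, Finset.mem_coe,
      Finset.coe_univ, Set.image_univ, Set.mem_range] at hcX
    obtain ⟨i, hi⟩ := hcX
    exact hxne i hi
  have hCi : ∀ i : Fin s, (Ci i).card ≤ q ^ t := by
    intro i
    have hcard : (Ci i).card ≤ Fintype.card (Fin t → F) := by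
      have := Finset.card_le_card_of_injOn
        (f := fun (c : Fin n → F) (j : Fin t) =>
          if h : (i:ℕ)*t + (j:ℕ) < n then c ⟨(i:ℕ)*t + (j:ℕ), h⟩ else f0)
        (s := Ci i) (t := (Finset.univ : Finset (Fin t → F)))
        (fun c _ => Finset.mem_univ _) ?_
      · simpa using this
      · intro a ha b hb hab
        simp only [Finset.mem_coe, Ci, Finset.mem_filter] at ha hb
        have hagree : ∀ k, β k = i → a k = b k := by
          intro k hk
          obtain ⟨j, hj, hkj⟩ := hblock k i hk
          have hlt : (i:ℕ)*t + j < n := by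
            have := k.isLt; omega
          have := congrFun hab ⟨j, hj⟩
          simp only [dif_pos hlt] at this
          have hkeq : k = ⟨(i:ℕ)*t + j, hlt⟩ := Fin.ext hkj
          rw [hkeq]; exact this
        exact (hb.2 a ha.1 hagree)
    have hcf : Fintype.card (Fin t → F) = q ^ t := by
      simp [Fintype.card_fun, hF]
    omega
  calc C.card ≤ (Finset.univ.biUnion Ci).card := Finset.card_le_card hcover
    _ ≤ ∑ i, (Ci i).card := Finset.card_biUnion_le
    _ ≤ ∑ _i : Fin s, q ^ t := Finset.sum_le_sum (fun i _ => hCi i)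
    _ = s * q ^ t := by simp [Finset.sum_const, Finset.card_univ, mul_comm]
end

section
/- Any t̄-separable code C ⊆ F^n with |F| = q satisfies |C| ≤ (t−1) · q^⌈n/(t−1)⌉. -/
theorem separable_card_bound {F : Type*} [Fintype F] {q n t : ℕ}
    (hq : 2 ≤ q) (hn : 2 ≤ n) (ht : 2 ≤ t) (hF : Fintype.card F = q)
    (C : Finset (Fin n → F))
    (hsep : ∀ X X' : Finset (Fin n → F), X ⊆ C → X' ⊆ C →
      X.Nonempty → X'.Nonempty → X.card ≤ t → X'.card ≤ t → X ≠ X' →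
      desc (X : Set (Fin n → F)) ≠ desc (X' : Set (Fin n → F))) :
    C.card ≤ (t - 1) * q ^ (⌈(n : ℚ) / (t - 1)⌉₊) := by
  classical
  by_contra hcon
  push_neg at hcon
  set s := t - 1 with hs
  set m := ⌈(n : ℚ) / (t - 1)⌉₊ with hm
  have hs1 : 1 ≤ s := by omega
  have htq : (0:ℚ) < (t:ℚ) - 1 := by
    have : (2:ℚ) ≤ (t:ℚ) := by exact_mod_cast ht
    linarith
  have hsq : ((t : ℚ) - 1) = (s : ℚ) := by
    rw [hs, Nat.cast_sub (by omega : 1 ≤ t)]; norm_num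
  have hm1 : 1 ≤ m := by
    rw [hm]
    have : (0:ℚ) < (n:ℚ) / ((t:ℚ) - 1) := by
      apply div_pos _ htq
      have : (2:ℚ) ≤ (n:ℚ) := by exact_mod_cast hn
      linarith
    exact Nat.ceil_pos.mpr this
  have hm0 : 0 < m := hm1
  have hnm : n ≤ s * m := by
    have h1 : (n:ℚ)/((t:ℚ)-1) ≤ (m:ℚ) := Nat.le_ceil _
    rw [div_le_iff₀ htq] at h1
    rw [hsq] at h1
    have : (n:ℚ) ≤ ((s*m : ℕ) : ℚ) := by push_cast; linarith
    exact_mod_cast this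
  -- block map
  have hβ : ∀ k : Fin n, k.val / m < s := by
    intro k
    rw [Nat.div_lt_iff_lt_mul hm0]
    have := k.isLt
    omega
  set β : Fin n → Fin s := fun k => ⟨k.val / m, hβ k⟩ with hβdef
  -- projection onto block i
  set proj : Fin s → (Fin n → F) → (Fin m → F) :=
    fun i c j => c ⟨min (i.val*m+j.val) (n-1),
      Nat.lt_of_le_of_lt (Nat.min_le_right _ _) (by omega)⟩ with hprojdef
  -- key: equal projections give equal values on the block
  have hkey : ∀ (i : Fin s) (c c' : Fin n → F), proj i c = proj i c' →
      ∀ k : Fin n, β k = i → c k = c' k := by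
    intro i c c' hp k hk
    have hkv : k.val / m = i.val := congrArg Fin.val hk
    have hj : k.val % m < m := Nat.mod_lt _ hm0
    have hkeq : i.val * m + k.val % m = k.val := by
      rw [← hkv, Nat.mul_comm]
      exact Nat.div_add_mod _ _
    have := congrFun hp ⟨k.val % m, hj⟩
    simp only [hprojdef] at this
    have hmin : min (i.val*m + k.val % m) (n-1) = k.val := by
      rw [hkeq]
      have := k.isLt
      omega
    simp only [hmin] at this
    simpa using this
  -- codewords with unique block-i projection
  set B : Fin s → Finset (Fin n → F) :=
    fun i => C.filter (fun c => ∀ x ∈ C, (∀ k, β k = i → x k = c k) → x = c) with hBdef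
  have hBcard : ∀ i, (B i).card ≤ q ^ m := by
    intro i
    have hinj : Set.InjOn (proj i) (B i) := by
      intro c hc c' hc' hp
      simp only [hBdef, Finset.coe_filter, Set.mem_setOf_eq] at hc hc'
      exact (hc.2 c' hc'.1 (fun k hk => (hkey i c c' hp k hk).symm)).symm
    calc (B i).card ≤ (Finset.univ : Finset (Fin m → F)).card :=
          Finset.card_le_card_of_injOn (proj i)
            (fun a _ => Finset.mem_univ (proj i a)) hinj
    _ = q ^ m := by rw [Finset.card_univ, Fintype.card_fun, hF, Fintype.card_fin]
  have hBsub : Finset.univ.biUnion B ⊆ C := by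
    intro c hc
    rcases Finset.mem_biUnion.mp hc with ⟨i, _, hci⟩
    exact Finset.mem_of_mem_filter c hci
  have hunion : (Finset.univ.biUnion B).card ≤ s * q ^ m := by
    calc (Finset.univ.biUnion B).card ≤ ∑ i, (B i).card := Finset.card_biUnion_le
    _ ≤ ∑ _i : Fin s, q ^ m := Finset.sum_le_sum (fun i _ => hBcard i)
    _ = s * q ^ m := by simp [Finset.sum_const, mul_comm]
  have hexc : ∃ c ∈ C, c ∉ Finset.univ.biUnion B := by
    by_contra hno
    push_neg at hno
    have : C ⊆ Finset.univ.biUnion B := hno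
    have := Finset.card_le_card this
    omega
  obtain ⟨c, hcC, hcB⟩ := hexc
  have hxall : ∀ i : Fin s, ∃ x ∈ C, x ≠ c ∧ ∀ k, β k = i → x k = c k := by
    intro i
    have : c ∉ B i := fun h => hcB (Finset.mem_biUnion.mpr ⟨i, Finset.mem_univ i, h⟩)
    simp only [hBdef, Finset.mem_filter, not_and, not_forall] at this
    obtain ⟨x, hx1, hx2, hx3⟩ := this hcC
    exact ⟨x, hx1, hx3, hx2⟩
  choose x hx_mem hx_ne hx_agree using hxall
  set X : Finset (Fin n → F) := Finset.image x Finset.univ with hXdef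
  have hXsub : X ⊆ C := by
    intro a ha
    rcases Finset.mem_image.mp ha with ⟨i, _, rfl⟩
    exact hx_mem i
  have hcX : c ∉ X := by
    intro hc
    rcases Finset.mem_image.mp hc with ⟨i, _, hi⟩
    exact hx_ne i hi
  have hXne : X.Nonempty := by
    refine ⟨x ⟨0, by omega⟩, Finset.mem_image.mpr ⟨⟨0, by omega⟩, Finset.mem_univ _, rfl⟩⟩
  have hXcard : X.card ≤ s := by
    calc X.card ≤ Finset.univ.card := Finset.card_image_le
    _ = s := by simp
  have hne : X ≠ insert c X := by
    intro h
    exact hcX (h ▸ Finset.mem_insert_self c X)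
  refine hsep X (insert c X) hXsub (Finset.insert_subset hcC hXsub) hXne
    ⟨c, Finset.mem_insert_self c X⟩ (by omega)
    (le_trans (Finset.card_insert_le c X) (by omega)) hne ?_
  ext y
  simp only [desc, Set.mem_setOf_eq, Finset.coe_insert, Set.mem_insert_iff,
    Finset.mem_coe]
  constructor
  · intro h k
    obtain ⟨z, hz, hyz⟩ := h k
    exact ⟨z, Or.inr hz, hyz⟩
  · intro h k
    obtain ⟨z, hz, hyz⟩ := h k
    rcases hz with rfl | hz
    · exact ⟨x (β k), Finset.mem_image.mpr ⟨β k, Finset.mem_univ _, rfl⟩,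
        by rw [hyz, ← hx_agree (β k) k rfl]⟩
    · exact ⟨z, hz, hyz⟩
end

section
/- Let C ⊆ F^n be a 2̄-separable code, write each word as a concatenation of a prefix of length r = ⌈2n/3⌉ and suffix of length s = ⌊n/3⌋. For a prefix a ∈ F^r let T_a be the set of suffixes of codewords with prefix a. Then for any distinct prefixes a, a' ∈ F^r, |T_a ∩ T_{a'}| ≤ 1. -/
theorem separable2_suffix_sets_intersect {F : Type*} [Fintype F] {q n : ℕ}
    (hq : 2 ≤ q) (hn : 2 ≤ n) (hF : Fintype.card F = q)
    (r s : ℕ) (hr : r = ⌈(2 * n : ℚ) / 3⌉₊) (hs : s = n / 3) (hrs : r + s = n)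
    (C : Finset (Fin n → F))
    (hsep : ∀ X X' : Finset (Fin n → F), X ⊆ C → X' ⊆ C →
      X.Nonempty → X'.Nonempty → X.card ≤ 2 → X'.card ≤ 2 → X ≠ X' →
      desc (X : Set (Fin n → F)) ≠ desc (X' : Set (Fin n → F)))
    (a a' : Fin r → F) (ha : a ≠ a') :
    Set.Subsingleton {b : Fin s → F |
      (∃ c ∈ C, (∀ i : Fin r, c ⟨i.1, by have := i.isLt; omega⟩ = a i) ∧
        (∀ i : Fin s, c ⟨r + i.1, by have := i.isLt; omega⟩ = b i)) ∧
      (∃ c ∈ C, (∀ i : Fin r, c ⟨i.1, by have := i.isLt; omega⟩ = a' i) ∧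
        (∀ i : Fin s, c ⟨r + i.1, by have := i.isLt; omega⟩ = b i))} := by
  classical
  intro b hb b' hb'
  by_contra hbb'
  obtain ⟨⟨c1, hc1C, hc1a, hc1b⟩, ⟨c2, hc2C, hc2a, hc2b⟩⟩ := hb
  obtain ⟨⟨c3, hc3C, hc3a, hc3b⟩, ⟨c4, hc4C, hc4a, hc4b⟩⟩ := hb'
  -- pick a suffix coordinate where b and b' differ
  obtain ⟨j, hj⟩ : ∃ j : Fin s, b j ≠ b' j := by
    by_contra h
    push_neg at h
    exact hbb' (funext h)
  obtain ⟨i0, hi0⟩ : ∃ i : Fin r, a i ≠ a' i := by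
    by_contra h
    push_neg at h
    exact ha (funext h)
  have key : ∀ k : Fin n, (c1 k = c3 k ∧ c4 k = c2 k) ∨ (c1 k = c2 k ∧ c4 k = c3 k) := by
    intro k
    by_cases hk : k.1 < r
    · left
      have h1 : c1 k = a ⟨k.1, hk⟩ := hc1a ⟨k.1, hk⟩
      have h3 : c3 k = a ⟨k.1, hk⟩ := hc3a ⟨k.1, hk⟩
      have h4 : c4 k = a' ⟨k.1, hk⟩ := hc4a ⟨k.1, hk⟩
      have h2 : c2 k = a' ⟨k.1, hk⟩ := hc2a ⟨k.1, hk⟩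
      exact ⟨h1.trans h3.symm, h4.trans h2.symm⟩
    · right
      have hk' : k.1 - r < s := by have := k.isLt; omega
      have hkeq : (⟨r + (⟨k.1 - r, hk'⟩ : Fin s).1, by omega⟩ : Fin n) = k := by
        ext; simp; omega
      have h1 : c1 k = b ⟨k.1 - r, hk'⟩ := by have := hc1b ⟨k.1 - r, hk'⟩; rwa [hkeq] at this
      have h2 : c2 k = b ⟨k.1 - r, hk'⟩ := by have := hc2b ⟨k.1 - r, hk'⟩; rwa [hkeq] at this
      have h3 : c3 k = b' ⟨k.1 - r, hk'⟩ := by have := hc3b ⟨k.1 - r, hk'⟩; rwa [hkeq] at this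
      have h4 : c4 k = b' ⟨k.1 - r, hk'⟩ := by have := hc4b ⟨k.1 - r, hk'⟩; rwa [hkeq] at this
      exact ⟨h1.trans h2.symm, h4.trans h3.symm⟩
  have hc13 : c1 ≠ c3 := by
    intro h
    apply hj
    rw [← hc1b j, ← hc3b j, h]
  have hc12 : c1 ≠ c2 := by
    intro h
    apply hi0
    rw [← hc1a i0, ← hc2a i0, h]
  have hne : ({c1, c4} : Finset (Fin n → F)) ≠ {c3, c2} := by
    intro h
    have : c1 ∈ ({c3, c2} : Finset (Fin n → F)) := by
      rw [← h]; simp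
    simp only [Finset.mem_insert, Finset.mem_singleton] at this
    rcases this with h' | h'
    · exact hc13 h'
    · exact hc12 h'
  have hdesc : desc (({c1, c4} : Finset (Fin n → F)) : Set (Fin n → F)) =
      desc (({c3, c2} : Finset (Fin n → F)) : Set (Fin n → F)) := by
    ext y
    simp only [desc, Set.mem_setOf_eq, Finset.coe_insert, Finset.coe_singleton,
      Set.mem_insert_iff, Set.mem_singleton_iff]
    constructor
    · intro h k
      obtain ⟨x, hx, hyx⟩ := h k
      rcases key k with ⟨e1, e2⟩ | ⟨e1, e2⟩ <;> rcases hx with rfl | rfl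
      · exact ⟨c3, Or.inl rfl, hyx.trans e1⟩
      · exact ⟨c2, Or.inr rfl, hyx.trans e2⟩
      · exact ⟨c2, Or.inr rfl, hyx.trans e1⟩
      · exact ⟨c3, Or.inl rfl, hyx.trans e2⟩
    · intro h k
      obtain ⟨x, hx, hyx⟩ := h k
      rcases key k with ⟨e1, e2⟩ | ⟨e1, e2⟩ <;> rcases hx with rfl | rfl
      · exact ⟨c1, Or.inl rfl, hyx.trans e1.symm⟩
      · exact ⟨c4, Or.inr rfl, hyx.trans e2.symm⟩
      · exact ⟨c4, Or.inr rfl, hyx.trans e2.symm⟩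
      · exact ⟨c1, Or.inl rfl, hyx.trans e1.symm⟩
  exact hsep {c1, c4} {c3, c2}
    (by intro x hx; simp only [Finset.mem_insert, Finset.mem_singleton] at hx
        rcases hx with rfl | rfl; exacts [hc1C, hc4C])
    (by intro x hx; simp only [Finset.mem_insert, Finset.mem_singleton] at hx
        rcases hx with rfl | rfl; exacts [hc3C, hc2C])
    ⟨c1, by simp⟩ ⟨c3, by simp⟩
    (Finset.card_insert_le _ _ |>.trans (by simp))
    (Finset.card_insert_le _ _ |>.trans (by simp))
    hne hdesc
end

section
/- Any 2̄-separable code C ⊆ F^n with |F| = q satisfies |C| ≤ q^⌈2n/3⌉ + (1/2) q^⌊n/3⌋ (q^⌊n/3⌋ − 1). -/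
/-- Prefix projection onto the first `s` coordinates. -/
def sepPI {F : Type*} {n : ℕ} (s : ℕ) (hs : s ≤ n) (x : Fin n → F) : Fin s → F :=
  fun i => x ⟨i.1, lt_of_lt_of_le i.isLt hs⟩

/-- Suffix projection onto the last `t` coordinates. -/
def sepPJ {F : Type*} {n : ℕ} (s t : ℕ) (h : s + t = n) (x : Fin n → F) : Fin t → F :=
  fun j => x ⟨s + j.1, h ▸ Nat.add_lt_add_left j.isLt s⟩

lemma sepProj_inj {F : Type*} {n : ℕ} {s t : ℕ} (h : s + t = n) (hs : s ≤ n)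
    {x y : Fin n → F} (h1 : sepPI s hs x = sepPI s hs y)
    (h2 : sepPJ s t h x = sepPJ s t h y) : x = y := by
  funext k
  by_cases hk : k.1 < s
  · have hx := congrFun h1 ⟨k.1, hk⟩
    simpa only [sepPI, Fin.eta] using hx
  · have hkn : k.1 < n := k.isLt
    have hx := congrFun h2 ⟨k.1 - s, by omega⟩
    simpa only [sepPJ, show s + (k.1 - s) = k.1 from by omega, Fin.eta] using hx

theorem separable2_card_bound {F : Type*} [Fintype F] {q n : ℕ}
    (hq : 2 ≤ q) (hn : 2 ≤ n) (hF : Fintype.card F = q)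
    (C : Finset (Fin n → F))
    (hsep : ∀ X X' : Finset (Fin n → F), X ⊆ C → X' ⊆ C →
      X.Nonempty → X'.Nonempty → X.card ≤ 2 → X'.card ≤ 2 → X ≠ X' →
      desc (X : Set (Fin n → F)) ≠ desc (X' : Set (Fin n → F))) :
    (C.card : ℝ) ≤ (q : ℝ) ^ (⌈(2 * n : ℚ) / 3⌉₊)
      + (1 / 2) * (q : ℝ) ^ (n / 3) * ((q : ℝ) ^ (n / 3) - 1) := by
  classical
  have hFne : Nonempty F := by
    rw [← Fintype.card_pos_iff, hF]; omega
  set t := n / 3 with ht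
  set s := n - t with hsdef
  have hts : t ≤ n := Nat.div_le_self n 3
  have hst : s + t = n := by omega
  have hs : s ≤ n := by omega
  set pI : (Fin n → F) → (Fin s → F) := sepPI s hs with hpI
  set pJ : (Fin n → F) → (Fin t → F) := sepPJ s t hst with hpJ
  have pinj : ∀ {x y : Fin n → F}, pI x = pI y → pJ x = pJ y → x = y :=
    fun h1 h2 => sepProj_inj hst hs h1 h2
  -- the key separability consequence
  have key : ∀ x y z w : Fin n → F, x ∈ C → y ∈ C → z ∈ C → w ∈ C →
      pI x = pI y → pI z = pI w → pI x ≠ pI z → pJ x = pJ z → pJ y = pJ w →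
      x ≠ y → z ≠ w → False := by
    intro x y z w hx hy hz hw hIxy hIzw hIxz hJxz hJyw hxy hzw
    have hpair : ∀ k : Fin n, (x k = y k ∧ w k = z k) ∨ (x k = z k ∧ w k = y k) := by
      intro k
      by_cases hk : k.1 < s
      · left
        constructor
        · have hx1 := congrFun hIxy ⟨k.1, hk⟩
          simpa only [hpI, sepPI, Fin.eta] using hx1
        · have hx1 := congrFun hIzw ⟨k.1, hk⟩
          simp only [hpI, sepPI, Fin.eta] at hx1
          exact hx1.symm
      · right
        have hkn : k.1 < n := k.isLt
        constructor
        · have hx1 := congrFun hJxz ⟨k.1 - s, by omega⟩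
          simpa only [hpJ, sepPJ, show s + (k.1 - s) = k.1 from by omega, Fin.eta] using hx1
        · have hx1 := congrFun hJyw ⟨k.1 - s, by omega⟩
          simp only [hpJ, sepPJ, show s + (k.1 - s) = k.1 from by omega, Fin.eta] at hx1
          exact hx1.symm
    have hxw : x ≠ w := by
      intro hcon
      exact hIxz (by rw [hcon, ← hIzw])
    have hyz : y ≠ z := by
      intro hcon
      exact hIxz (by rw [hIxy, hcon])
    have hxz : x ≠ z := fun hcon => hIxz (by rw [hcon])
    refine hsep {x, w} {y, z} ?_ ?_ ⟨x, by simp⟩ ⟨y, by simp⟩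
        (Finset.card_insert_le _ _ |>.trans (by simp)) (Finset.card_insert_le _ _ |>.trans (by simp))
        ?_ ?_
    · intro a ha
      simp only [Finset.mem_insert, Finset.mem_singleton] at ha
      rcases ha with rfl | rfl <;> assumption
    · intro a ha
      simp only [Finset.mem_insert, Finset.mem_singleton] at ha
      rcases ha with rfl | rfl <;> assumption
    · intro hcon
      have : x ∈ ({y, z} : Finset (Fin n → F)) := by rw [← hcon]; simp
      simp only [Finset.mem_insert, Finset.mem_singleton] at this
      rcases this with h | h
      · exact hxy h
      · exact hxz h
    · ext c
      simp only [desc, Finset.coe_insert, Finset.coe_singleton, Set.mem_setOf_eq,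
        Set.mem_insert_iff, Set.mem_singleton_iff]
      constructor
      · intro h k
        rcases h k with ⟨a, (rfl | rfl), hac⟩ <;> rcases hpair k with ⟨h1, h2⟩ | ⟨h1, h2⟩
        · exact ⟨y, Or.inl rfl, by rw [hac, h1]⟩
        · exact ⟨z, Or.inr rfl, by rw [hac, h1]⟩
        · exact ⟨z, Or.inr rfl, by rw [hac, ← h2]⟩
        · exact ⟨y, Or.inl rfl, by rw [hac, ← h2]⟩
      · intro h k
        rcases h k with ⟨a, (rfl | rfl), hac⟩ <;> rcases hpair k with ⟨h1, h2⟩ | ⟨h1, h2⟩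
        · exact ⟨x, Or.inl rfl, by rw [hac, ← h1]⟩
        · exact ⟨w, Or.inr rfl, by rw [hac, h2]⟩
        · exact ⟨w, Or.inr rfl, by rw [hac, ← h2]⟩
        · exact ⟨x, Or.inl rfl, by rw [hac, h1]⟩
  -- representatives
  have hrep : ∀ v ∈ C.image pI, ∃ x, x ∈ C ∧ pI x = v := by
    intro v hv
    rcases Finset.mem_image.mp hv with ⟨x, hx, hxv⟩
    exact ⟨x, hx, hxv⟩
  set rep : (Fin s → F) → (Fin n → F) :=
    fun v => if h : ∃ x, x ∈ C ∧ pI x = v then h.choose else fun _ => Classical.arbitrary F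
    with hrepdef
  have hrep_mem : ∀ v ∈ C.image pI, rep v ∈ C ∧ pI (rep v) = v := by
    intro v hv
    obtain ⟨x, hx, hxv⟩ := hrep (v) hv
    have hex : ∃ x, x ∈ C ∧ pI x = v := ⟨x, hx, hxv⟩
    simp only [hrepdef, dif_pos hex]
    exact hex.choose_spec
  set R : Finset (Fin n → F) := (C.image pI).image rep with hR
  have hRC : R ⊆ C := by
    intro a ha
    rcases Finset.mem_image.mp ha with ⟨v, hv, rfl⟩
    exact (hrep_mem v hv).1
  -- card of R
  have hRcard : R.card ≤ q ^ s := by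
    calc R.card ≤ (C.image pI).card := Finset.card_image_le
      _ ≤ Fintype.card (Fin s → F) := by
          rw [← Finset.card_univ]
          exact Finset.card_le_card (Finset.subset_univ _)
      _ = q ^ s := by rw [Fintype.card_fun, hF, Fintype.card_fin]
  -- injection from C \ R into pairs of suffix projections
  have hCR : (C \ R).card ≤ (q ^ t).choose 2 := by
    have hmaps : ∀ x ∈ C \ R,
        ({pJ x, pJ (rep (pI x))} : Finset (Fin t → F)) ∈
          (Finset.univ : Finset (Fin t → F)).powersetCard 2 := by
      intro x hx
      rcases Finset.mem_sdiff.mp hx with ⟨hxC, hxR⟩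
      have hvmem : pI x ∈ C.image pI := Finset.mem_image_of_mem _ hxC
      obtain ⟨hrC, hrI⟩ := hrep_mem _ hvmem
      have hxr : x ≠ rep (pI x) := by
        intro hcon
        exact hxR (by rw [hcon]; exact Finset.mem_image_of_mem _ hvmem)
      have hJne : pJ x ≠ pJ (rep (pI x)) := by
        intro hcon
        exact hxr (pinj hrI.symm hcon)
      rw [Finset.mem_powersetCard]
      refine ⟨Finset.subset_univ _, ?_⟩
      rw [Finset.card_insert_of_notMem (by simpa using hJne), Finset.card_singleton]
    have hinj : ((C \ R : Finset (Fin n → F)) : Set (Fin n → F)).InjOn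
        (fun x => ({pJ x, pJ (rep (pI x))} : Finset (Fin t → F))) := by
      intro x hx x' hx' heq
      simp only [Finset.mem_coe, Finset.mem_sdiff] at hx hx'
      obtain ⟨hxC, hxR⟩ := hx
      obtain ⟨hx'C, hx'R⟩ := hx'
      have hvx : pI x ∈ C.image pI := Finset.mem_image_of_mem _ hxC
      have hvx' : pI x' ∈ C.image pI := Finset.mem_image_of_mem _ hx'C
      obtain ⟨hrC, hrI⟩ := hrep_mem _ hvx
      obtain ⟨hr'C, hr'I⟩ := hrep_mem _ hvx'
      have hxr : x ≠ rep (pI x) := by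
        intro hcon; exact hxR (by rw [hcon]; exact Finset.mem_image_of_mem _ hvx)
      have hx'r : x' ≠ rep (pI x') := by
        intro hcon; exact hx'R (by rw [hcon]; exact Finset.mem_image_of_mem _ hvx')
      have hJxr : pJ x ≠ pJ (rep (pI x)) := fun hcon => hxr (pinj hrI.symm hcon)
      have hJx'r : pJ x' ≠ pJ (rep (pI x')) := fun hcon => hx'r (pinj hr'I.symm hcon)
      -- unpack the pair equality
      have heq2 : ({pJ x, pJ (rep (pI x))} : Finset (Fin t → F))
          = {pJ x', pJ (rep (pI x'))} := heq
      have hmem : pJ x ∈ ({pJ x', pJ (rep (pI x'))} : Finset (Fin t → F)) := by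
        rw [← heq2]; simp
      have hmem2 : pJ (rep (pI x)) ∈ ({pJ x', pJ (rep (pI x'))} : Finset (Fin t → F)) := by
        rw [← heq2]; simp
      simp only [Finset.mem_insert, Finset.mem_singleton] at hmem hmem2
      by_cases hvv : pI x = pI x'
      · -- same fiber: reps coincide
        have hrr : rep (pI x) = rep (pI x') := by rw [hvv]
        rcases hmem with h1 | h1
        · exact pinj hvv h1
        · exact (hJxr (by rw [hrr]; exact h1)).elim
      · exfalso
        rcases hmem with h1 | h1
        · -- pJ x = pJ x', so pJ (rep) must also pair up
          rcases hmem2 with h2 | h2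
          · exact hJxr (h1.trans h2.symm)
          · exact key x (rep (pI x)) x' (rep (pI x')) hxC hrC hx'C hr'C
              hrI.symm hr'I.symm hvv h1 h2 hxr hx'r
        · rcases hmem2 with h2 | h2
          · exact key x (rep (pI x)) (rep (pI x')) x' hxC hrC hr'C hx'C
              hrI.symm hr'I (fun hc => hvv (hc.trans hr'I)) h1 h2 hxr
              (fun hc => hx'r hc.symm)
          · exact hJxr (h1.trans h2.symm)
    calc (C \ R).card ≤ ((Finset.univ : Finset (Fin t → F)).powersetCard 2).card :=
          Finset.card_le_card_of_injOn _ hmaps hinj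
      _ = (q ^ t).choose 2 := by
          rw [Finset.card_powersetCard, Finset.card_univ, Fintype.card_fun, hF,
            Fintype.card_fin]
  -- assemble the natural-number bound
  have hnat : C.card ≤ q ^ s + (q ^ t).choose 2 := by
    have := Finset.card_sdiff_add_card_eq_card hRC
    omega
  -- pass to the reals
  have hcast : (C.card : ℝ) ≤ (q : ℝ) ^ s + ((q ^ t).choose 2 : ℝ) := by
    have := (Nat.cast_le (α := ℝ)).mpr hnat
    push_cast at this
    convert this using 2
  have hceil : s ≤ ⌈(2 * n : ℚ) / 3⌉₊ := by
    have hs1 : 1 ≤ s := by omega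
    have h3 : ((s - 1 : ℕ) : ℚ) < (2 * n : ℚ) / 3 := by
      rw [lt_div_iff₀ (by norm_num)]
      have : 3 * (s - 1) < 2 * n := by omega
      calc ((s - 1 : ℕ) : ℚ) * 3 = ((3 * (s - 1) : ℕ) : ℚ) := by push_cast; ring
        _ < ((2 * n : ℕ) : ℚ) := by exact_mod_cast this
        _ = 2 * n := by push_cast; ring
    have := Nat.lt_ceil.mpr h3
    omega
  have hq1 : (1 : ℝ) ≤ (q : ℝ) := by exact_mod_cast (by omega : 1 ≤ q)
  have hpow : (q : ℝ) ^ s ≤ (q : ℝ) ^ (⌈(2 * n : ℚ) / 3⌉₊) :=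
    pow_le_pow_right₀ hq1 hceil
  have hchoose : ((q ^ t).choose 2 : ℝ) =
      (1 / 2) * (q : ℝ) ^ t * ((q : ℝ) ^ t - 1) := by
    rw [Nat.cast_choose_two]
    push_cast
    ring
  calc (C.card : ℝ) ≤ (q : ℝ) ^ s + ((q ^ t).choose 2 : ℝ) := hcast
    _ ≤ (q : ℝ) ^ (⌈(2 * n : ℚ) / 3⌉₊) + (1 / 2) * (q : ℝ) ^ t * ((q : ℝ) ^ t - 1) := by
        rw [hchoose] at *
        exact add_le_add hpow le_rfl
    _ = _ := by rw [ht]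
end

section
/- If c_1, ..., c_N are chosen uniformly and independently at random from F^n with |F| = q, then for fixed distinct indices i < j, i' < j' with {i,j} ∩ {i',j'} = ∅, the probability that desc({c_i, c_j}) = desc({c_{i'}, c_{j'}}) is at most (2/q²)^n. -/
lemma mem_desc_pair {F : Type*} {n : ℕ} (a b y : Fin n → F) :
    y ∈ desc ({a, b} : Set (Fin n → F)) ↔ ∀ k, y k = a k ∨ y k = b k := by
  simp [desc]

lemma desc_pair_eq_iff {F : Type*} {n : ℕ} (a b a' b' : Fin n → F) :
    desc ({a, b} : Set (Fin n → F)) = desc ({a', b'} : Set (Fin n → F)) ↔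
      ∀ k, ({a k, b k} : Set F) = {a' k, b' k} := by
  classical
  constructor
  · intro h k
    have key : ∀ (u v u' v' : Fin n → F), desc ({u, v} : Set (Fin n → F)) ⊆
        desc ({u', v'} : Set (Fin n → F)) →
        ({u k, v k} : Set F) ⊆ {u' k, v' k} := by
      intro u v u' v' hsub s hs
      set y : Fin n → F := Function.update u k s with hy
      have hmem : y ∈ desc ({u, v} : Set (Fin n → F)) := by
        rw [mem_desc_pair]
        intro m
        by_cases hm : m = k
        · subst hm
          simp only [hy, Function.update_self]
          simpa using hs
        · left; simp [hy, Function.update_of_ne hm]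
      have := (mem_desc_pair u' v' y).mp (hsub hmem) k
      simpa [hy, Function.update_self] using this
    exact Set.Subset.antisymm (key a b a' b' h.le) (key a' b' a b h.ge)
  · intro h
    ext y
    rw [mem_desc_pair, mem_desc_pair]
    refine forall_congr' fun k => ?_
    have := h k
    constructor
    · intro hk
      have : y k ∈ ({a' k, b' k} : Set F) := this ▸ (by simpa using hk)
      simpa using this
    · intro hk
      have : y k ∈ ({a k, b k} : Set F) := this.symm ▸ (by simpa using hk)
      simpa using this

lemma card_eq_pair_le {F : Type*} [Fintype F] {q N : ℕ} (hF : Fintype.card F = q)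
    (a b a' b' : Fin N) (hab : a ≠ b) (hne : a' ≠ a ∧ a' ≠ b ∧ b' ≠ a ∧ b' ≠ b) :
    Nat.card {v : Fin N → F // v a = v a' ∧ v b = v b'} ≤ q ^ (N - 2) := by
  classical
  have hinj : Function.Injective
      (fun (v : {v : Fin N → F // v a = v a' ∧ v b = v b'}) =>
        (fun m : {m : Fin N // m ≠ a ∧ m ≠ b} => v.1 m.1)) := by
    rintro ⟨v, hv1, hv2⟩ ⟨w, hw1, hw2⟩ h
    have hres : ∀ m : Fin N, m ≠ a → m ≠ b → v m = w m := by
      intro m h1 h2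
      exact congrFun h ⟨m, h1, h2⟩
    refine Subtype.ext (funext fun m => ?_)
    show v m = w m
    by_cases h1 : m = a
    · rw [h1, hv1, hw1]
      exact hres a' hne.1 hne.2.1
    by_cases h2 : m = b
    · rw [h2, hv2, hw2]
      exact hres b' hne.2.2.1 hne.2.2.2
    exact hres m h1 h2
  have h1 := Nat.card_le_card_of_injective _ hinj
  have h2 : Nat.card ({m : Fin N // m ≠ a ∧ m ≠ b} → F) = q ^ (N - 2) := by
    rw [Nat.card_fun]
    congr 1
    · rw [Nat.card_eq_fintype_card, hF]
    · have e1 : Nat.card {m : Fin N // m ≠ a ∧ m ≠ b}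
          = (({a, b} : Set (Fin N))ᶜ).ncard := by
        rw [← Nat.card_coe_set_eq]
        apply Nat.card_congr
        apply Equiv.subtypeEquivRight
        intro m
        simp [not_or]
      have e2 : ({a, b} : Set (Fin N)).ncard + (({a, b} : Set (Fin N))ᶜ).ncard
          = Nat.card (Fin N) := Set.ncard_add_ncard_compl _
      rw [Set.ncard_pair hab, Nat.card_eq_fintype_card, Fintype.card_fin] at e2
      exact e1.trans (Nat.eq_sub_of_add_eq' e2)
  exact le_trans h1 h2.le

theorem prob_desc_pairs_eq {F : Type*} [Fintype F] {q n N : ℕ}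
    (hq : 2 ≤ q) (hn : 2 ≤ n) (hF : Fintype.card F = q)
    (i j i' j' : Fin N) (hij : i < j) (hij' : i' < j')
    (hd : ({i, j} : Set (Fin N)) ∩ {i', j'} = ∅) :
    (Nat.card {ω : Fin N → Fin n → F //
        desc ({ω i, ω j} : Set (Fin n → F)) = desc ({ω i', ω j'} : Set (Fin n → F))} : ℝ)
      ≤ (2 / (q : ℝ) ^ 2) ^ n * Fintype.card (Fin N → Fin n → F) := by
  classical
  -- distinctness facts
  have hne : i ≠ i' ∧ i ≠ j' ∧ j ≠ i' ∧ j ≠ j' := by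
    have h1 : i ∉ ({i', j'} : Set (Fin N)) := by
      intro h
      have : i ∈ (({i, j} : Set (Fin N)) ∩ {i', j'}) := ⟨by simp, h⟩
      rw [hd] at this; exact this
    have h2 : j ∉ ({i', j'} : Set (Fin N)) := by
      intro h
      have : j ∈ (({i, j} : Set (Fin N)) ∩ {i', j'}) := ⟨by simp, h⟩
      rw [hd] at this; exact this
    simp only [Set.mem_insert_iff, Set.mem_singleton_iff, not_or] at h1 h2
    exact ⟨h1.1, h1.2, h2.1, h2.2⟩
  set Q : (Fin N → F) → Prop := fun v => ({v i, v j} : Set F) = {v i', v j'} with hQ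
  -- step 1: card of the event = (card {v // Q v}) ^ n
  have step1 : Nat.card {ω : Fin N → Fin n → F //
        desc ({ω i, ω j} : Set (Fin n → F)) = desc ({ω i', ω j'} : Set (Fin n → F))}
      = Nat.card {v : Fin N → F // Q v} ^ n := by
    have e : {ω : Fin N → Fin n → F //
        desc ({ω i, ω j} : Set (Fin n → F)) = desc ({ω i', ω j'} : Set (Fin n → F))}
        ≃ (Fin n → {v : Fin N → F // Q v}) :=
      { toFun := fun ω k => ⟨fun m => ω.1 m k,
          ((desc_pair_eq_iff _ _ _ _).mp ω.2) k⟩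
        invFun := fun f => ⟨fun m k => (f k).1 m,
          (desc_pair_eq_iff _ _ _ _).mpr fun k => (f k).2⟩
        left_inv := fun ω => rfl
        right_inv := fun f => rfl }
    rw [Nat.card_congr e, Nat.card_fun]
    simp
  -- step 2: card {v // Q v} ≤ 2 * q ^ (N - 2)
  have step2 : Nat.card {v : Fin N → F // Q v} ≤ 2 * q ^ (N - 2) := by
    have hsub : {v : Fin N → F | Q v} ⊆
        {v : Fin N → F | v i = v i' ∧ v j = v j'} ∪ {v | v i = v j' ∧ v j = v i'} := by
      intro v hv
      rcases Set.pair_eq_pair_iff.mp hv with h | h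
      · exact Or.inl h
      · exact Or.inr h
    calc Nat.card {v : Fin N → F // Q v}
        = ({v : Fin N → F | Q v}).ncard := Nat.card_coe_set_eq _
      _ ≤ ({v : Fin N → F | v i = v i' ∧ v j = v j'} ∪
            {v | v i = v j' ∧ v j = v i'}).ncard :=
          Set.ncard_le_ncard hsub (Set.toFinite _)
      _ ≤ ({v : Fin N → F | v i = v i' ∧ v j = v j'}).ncard +
            ({v : Fin N → F | v i = v j' ∧ v j = v i'}).ncard :=
          Set.ncard_union_le _ _
      _ ≤ q ^ (N - 2) + q ^ (N - 2) := by
          gcongr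
          · rw [← Nat.card_coe_set_eq]
            exact card_eq_pair_le hF i j i' j' hij.ne ⟨hne.1.symm, hne.2.2.1.symm,
              hne.2.1.symm, hne.2.2.2.symm⟩
          · rw [← Nat.card_coe_set_eq]
            exact card_eq_pair_le hF i j j' i' hij.ne ⟨hne.2.1.symm, hne.2.2.2.symm,
              hne.1.symm, hne.2.2.1.symm⟩
      _ = 2 * q ^ (N - 2) := by ring
  -- get N ≥ 2
  have hN : 2 ≤ N := by
    have h1 : (i' : ℕ) < (j' : ℕ) := hij'
    have h2 : (j' : ℕ) < N := j'.isLt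
    exact le_trans (Nat.succ_le_succ (Nat.lt_of_le_of_lt (Nat.zero_le _) h1)) h2
  -- now the real estimate
  have hq0 : (0:ℝ) < q := by positivity
  have hcard : (Fintype.card (Fin N → Fin n → F) : ℝ) = (q : ℝ) ^ (N * n) := by
    rw [Fintype.card_fun, Fintype.card_fun, hF, Fintype.card_fin, Fintype.card_fin,
      ← pow_mul]
    push_cast
    ring
  rw [step1, hcard]
  have hb : (Nat.card {v : Fin N → F // Q v} : ℝ) ≤ 2 * (q:ℝ) ^ (N - 2) := by
    calc (Nat.card {v : Fin N → F // Q v} : ℝ) ≤ ((2 * q ^ (N - 2) : ℕ) : ℝ) := by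
          exact_mod_cast step2
      _ = 2 * (q:ℝ) ^ (N - 2) := by push_cast; ring
  calc ((Nat.card {v : Fin N → F // Q v} ^ n : ℕ) : ℝ)
      = ((Nat.card {v : Fin N → F // Q v} : ℝ)) ^ n := by push_cast; ring
    _ ≤ (2 * (q:ℝ) ^ (N - 2)) ^ n := by
        apply pow_le_pow_left₀ (by positivity) hb
    _ = (2 / (q : ℝ) ^ 2) ^ n * (q:ℝ) ^ (N * n) := by
        have harith : (N - 2) * n + 2 * n = N * n := by
          rw [← add_mul, Nat.sub_add_cancel hN]
        rw [mul_pow, div_pow, ← pow_mul, ← pow_mul, div_mul_eq_mul_div,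
          eq_div_iff (by positivity), mul_assoc, ← pow_add, harith]
end

section
/- For all integers q ≥ 2, n ≥ 2 and all N ∈ ℕ, there exists a q-ary 2̄-separable code of length n with at least N − ⌊binom(N,2)·q^{−n} + 3·binom(N,4)·2^n·q^{−2n}⌋ codewords. -/
/-!
Alteration method. Pick `N` words of `F^n` independently and uniformly at random. When the words
are distinct, two distinct sets of at most two of them can only have the same descendants if they
are `{a, b}` and `{c, d}` for four distinct words with `{a k, b k} = {c k, d k}` in every
coordinate `k`. A given pair of words
coincides with probability `q^(-n)`, and for each of the `3 * N.choose 4` ways of splitting four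
indices into two pairs, the splitting has this property with probability at most `(2 / q^2)^n`.
Deleting one word of each bad pair and of each bad splitting leaves a 2̄-separable code, and some
choice of the words deletes no more than the expected number of words.
-/

open Finset
open scoped Classical

theorem Fintype.card_orderEmbedding_fin (k N : ℕ) :
    Fintype.card (Fin k ↪o Fin N) = N.choose k := by
  rw [← Nat.card_eq_fintype_card, Nat.card_congr Set.powersetCard.ofFinEmbEquiv,
    Set.powersetCard.card, Nat.card_eq_fintype_card, Fintype.card_fin]

theorem Set.pair_eq_pair_unique {α : Type*} {a b c d c' d' : α}
    (h : ({a, b} : Set α) = {c, d}) (h' : ({a, b} : Set α) = {c', d'}) (hc : c = a ↔ c' = a) :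
    c = c' ∧ d = d' := by
  rw [Set.pair_eq_pair_iff] at h h'
  grind

theorem Finset.exists_eq_pair_of_card_le_two {α : Type*} [DecidableEq α] {s : Finset α}
    (hs : s.Nonempty) (h2 : #s ≤ 2) : ∃ a b, s = {a, b} := by
  rcases (show #s = 1 ∨ #s = 2 by have := hs.card_pos; omega) with h | h
  · obtain ⟨a, rfl⟩ := card_eq_one.1 h
    exact ⟨a, a, by simp⟩
  · obtain ⟨a, b, -, rfl⟩ := card_eq_two.1 h
    exact ⟨a, b, rfl⟩

theorem Finset.sum_card_filter_mul_le {X Y : Type*} [Fintype X] [Fintype Y] (r : X → Y → Prop)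
    {m b : ℕ} (h : ∀ y, #{x | r x y} * m ≤ b) :
    ∑ x, #{y | r x y} * m ≤ Fintype.card Y * b := by
  have := sum_card_bipartiteAbove_eq_sum_card_bipartiteBelow (s := (univ : Finset X))
    (t := (univ : Finset Y)) (r := r)
  simp only [bipartiteAbove, bipartiteBelow] at this
  rw [← sum_mul, this, sum_mul, ← card_univ, ← smul_eq_mul]
  exact sum_le_card_nsmul _ _ _ fun y _ => h y

theorem card_filter_apply_eq_mul_le {ι β : Type*} [Fintype ι] [DecidableEq ι] [Fintype β]
    {i j : ι} (hij : i ≠ j) :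
    #{f : ι → β | f i = f j} * Fintype.card β ≤ Fintype.card β ^ Fintype.card ι := by
  rw [← Fintype.card_fun, ← card_univ, ← card_product, ← card_univ]
  refine card_le_card_of_injOn (fun p => Function.update p.1 j p.2)
    (fun _ _ => mem_coe.2 (mem_univ _)) ?_
  rintro ⟨f, u⟩ hf ⟨g, v⟩ hg h
  simp only [coe_product, Set.mem_prod, mem_coe, mem_filter, mem_univ, true_and, and_true]
    at hf hg
  have huv : u = v := by simpa using congrFun h j
  subst huv
  have hoff : ∀ t, t ≠ j → f t = g t := fun t ht => by
    simpa [Function.update_of_ne ht] using congrFun h t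
  refine Prod.ext (funext fun t => ?_) rfl
  by_cases ht : t = j
  · subst ht; exact hf.symm.trans ((hoff i hij).trans hg)
  · exact hoff t ht

namespace SeparableCode

variable {F : Type*} {n : ℕ}

def IsSeparable2 (C : Finset (Fin n → F)) : Prop :=
  ∀ X X' : Finset (Fin n → F), X ⊆ C → X' ⊆ C →
    X.Nonempty → X'.Nonempty → X.card ≤ 2 → X'.card ≤ 2 → X ≠ X' →
    desc (X : Set (Fin n → F)) ≠ desc (X' : Set (Fin n → F))

theorem image_eval_desc (X : Set (Fin n → F)) (k : Fin n) :
    (fun y => y k) '' desc X = (fun x => x k) '' X := by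
  refine Set.Subset.antisymm ?_ (Set.image_mono fun x hx j => ⟨x, hx, rfl⟩)
  rintro _ ⟨y, hy, rfl⟩
  obtain ⟨x, hx, hyx⟩ := hy k
  exact ⟨x, hx, hyx.symm⟩

theorem pair_eq_pair_of_forall_pair_apply_eq {a b c d : Fin n → F}
    (h : ∀ k, ({a k, b k} : Set F) = {c k, d k})
    (hcoincide : a = c ∨ a = d ∨ b = c ∨ b = d ∨ a = b ∨ c = d) :
    ({a, b} : Finset (Fin n → F)) = {c, d} := by
  have h' := fun k => Set.pair_eq_pair_iff.1 (h k)
  rcases hcoincide with rfl | rfl | rfl | rfl | rfl | rfl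
  · rw [show b = d from funext fun k => by grind]
  · rw [show b = c from funext fun k => by grind, pair_comm]
  · rw [show a = d from funext fun k => by grind, pair_comm]
  · rw [show a = c from funext fun k => by grind]
  · rw [show c = a from funext fun k => by grind, show d = a from funext fun k => by grind]
  · rw [show a = c from funext fun k => by grind, show b = c from funext fun k => by grind]

theorem IsSeparable2.of_forall_exists_pair_apply_ne {C : Finset (Fin n → F)}
    (hC : ∀ a ∈ C, ∀ b ∈ C, ∀ c ∈ C, ∀ d ∈ C, a ≠ b → c ≠ d → a ≠ c → a ≠ d → b ≠ c → b ≠ d →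
      ∃ k, ({a k, b k} : Set F) ≠ {c k, d k}) :
    IsSeparable2 C := by
  intro X X' hX hX' hXne hX'ne hX2 hX'2 hne hdesc
  obtain ⟨a, b, rfl⟩ := exists_eq_pair_of_card_le_two hXne hX2
  obtain ⟨c, d, rfl⟩ := exists_eq_pair_of_card_le_two hX'ne hX'2
  have hproj (k : Fin n) : ({a k, b k} : Set F) = {c k, d k} := by
    simpa [Set.image_pair] using
      (image_eval_desc _ k).symm.trans ((congrArg _ hdesc).trans (image_eval_desc _ k))
  have hdistinct : a ≠ b ∧ c ≠ d ∧ a ≠ c ∧ a ≠ d ∧ b ≠ c ∧ b ≠ d := by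
    by_contra hcoincide
    exact hne (pair_eq_pair_of_forall_pair_apply_eq hproj (by tauto))
  obtain ⟨hab, hcd, hac, had, hbc, hbd⟩ := hdistinct
  obtain ⟨k, hk⟩ := hC a (hX (by simp)) b (hX (by simp)) c (hX' (by simp)) d (hX' (by simp))
    hab hcd hac had hbc hbd
  exact hk (hproj k)

variable {ι κ α : Type*}

/-- For distinct words this says that `{f (t 0), f (t 1)}` and `{f (t 2), f (t 3)}` have the same
descendants. -/
def Confusable (f : ι → κ → α) (t : Fin 4 → ι) : Prop :=
  ∀ k, ({f (t 0) k, f (t 1) k} : Set α) = {f (t 2) k, f (t 3) k}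

theorem Confusable.swap_left {f : ι → κ → α} {a b c d : ι} (h : Confusable f ![a, b, c, d]) :
    Confusable f ![b, a, c, d] := fun k => by simpa [Set.pair_comm] using h k

theorem Confusable.swap_right {f : ι → κ → α} {a b c d : ι} (h : Confusable f ![a, b, c, d]) :
    Confusable f ![a, b, d, c] := fun k => by simpa [Set.pair_comm] using h k

theorem Confusable.symm {f : ι → κ → α} {a b c d : ι} (h : Confusable f ![a, b, c, d]) :
    Confusable f ![c, d, a, b] := fun k => by simpa using (h k).symm

theorem card_filter_confusable_mul_le [Fintype ι] [DecidableEq ι] [Fintype κ] [Fintype α]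
    {t : Fin 4 → ι} (ht : Function.Injective t) :
    #{f : ι → κ → α | Confusable f t} * Fintype.card (κ → α) ^ 2 ≤
      2 ^ Fintype.card κ * Fintype.card (κ → α) ^ Fintype.card ι := by
  rw [sq, ← Fintype.card_prod, ← Fintype.card_bool, ← Fintype.card_fun, ← Fintype.card_fun,
    ← Fintype.card_prod, ← card_univ, ← card_product, ← card_univ]
  refine card_le_card_of_injOn
    (fun p => (fun k => decide (p.1 (t 2) k = p.1 (t 0) k),
      Function.update (Function.update p.1 (t 2) p.2.1) (t 3) p.2.2))
    (fun _ _ => mem_coe.2 (mem_univ _)) ?_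
  rintro ⟨f, u, v⟩ hf ⟨g, u', v'⟩ hg h
  simp only [coe_product, Set.mem_prod, mem_coe, mem_filter, mem_univ, true_and, and_true]
    at hf hg
  obtain ⟨hflag, hupd⟩ := Prod.mk.inj h
  have h23 : t 2 ≠ t 3 := ht.ne (by decide)
  have hv : v = v' := by simpa using congrFun hupd (t 3)
  have hu : u = u' := by simpa [Function.update_of_ne h23] using congrFun hupd (t 2)
  have hoff : ∀ s, s ≠ t 2 → s ≠ t 3 → f s = g s := fun s h2 h3 => by
    simpa [Function.update_of_ne h2, Function.update_of_ne h3] using congrFun hupd s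
  have h0 := hoff (t 0) (ht.ne (by decide)) (ht.ne (by decide))
  have h1 := hoff (t 1) (ht.ne (by decide)) (ht.ne (by decide))
  -- `{f (t 0), f (t 1)}` and the flag `f (t 2) = f (t 0)` determine `f (t 2)` and `f (t 3)`
  have hdetermined : ∀ k, f (t 2) k = g (t 2) k ∧ f (t 3) k = g (t 3) k := fun k =>
    Set.pair_eq_pair_unique (hf k) (by rw [h0, h1]; exact hg k)
      (by simpa [h0] using congrFun hflag k)
  subst hu hv
  refine Prod.ext (funext fun s => ?_) rfl
  by_cases h2 : s = t 2
  · subst h2; exact funext fun k => (hdetermined k).1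
  by_cases h3 : s = t 3
  · subst h3; exact funext fun k => (hdetermined k).2
  exact hoff s h2 h3

/-- The three ways of splitting four sorted indices into two pairs. -/
def pairing : Fin 3 → Fin 4 → Fin 4 := ![![0, 1, 2, 3], ![0, 2, 1, 3], ![0, 3, 1, 2]]

theorem pairing_injective (r : Fin 3) : Function.Injective (pairing r) := by
  revert r; decide

variable {N : ℕ}

noncomputable def collisions {β : Type*} (f : Fin N → β) : Finset (Fin 2 ↪o Fin N) :=
  {e | f (e 0) = f (e 1)}

noncomputable def confusions (f : Fin N → κ → α) : Finset ((Fin 4 ↪o Fin N) × Fin 3) :=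
  {p | Confusable f (p.1 ∘ pairing p.2)}

noncomputable def deleted (f : Fin N → κ → α) : Finset (Fin N) :=
  (collisions f).image (· 1) ∪ (confusions f).image fun p => p.1 (pairing p.2 3)

theorem card_deleted_le (f : Fin N → κ → α) :
    #(deleted f) ≤ #(collisions f) + #(confusions f) :=
  (card_union_le _ _).trans (add_le_add card_image_le card_image_le)

theorem mem_deleted_of_lt_of_apply_eq {f : Fin N → κ → α} {i j : Fin N} (hij : i < j)
    (h : f i = f j) : j ∈ deleted f := by
  refine mem_union_left _ (mem_image.2 ⟨OrderEmbedding.ofStrictMono ![i, j] ?_, ?_, rfl⟩)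
  · simp [strictMono_vecCons, hij]
  · simpa [collisions] using h

theorem mem_deleted_of_apply_eq {f : Fin N → κ → α} {i j : Fin N} (hij : i ≠ j)
    (h : f i = f j) : i ∈ deleted f ∨ j ∈ deleted f := by
  rcases lt_or_gt_of_ne hij with hij | hji
  · exact Or.inr (mem_deleted_of_lt_of_apply_eq hij h)
  · exact Or.inl (mem_deleted_of_lt_of_apply_eq hji h.symm)

theorem mem_deleted_of_confusable_of_lt {f : Fin N → κ → α} {a b c d : Fin N}
    (hab : a < b) (hcd : c < d) (hac : a < c) (hbc : b ≠ c) (hbd : b ≠ d)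
    (h : Confusable f ![a, b, c, d]) : d ∈ deleted f := by
  suffices ∃ p : (Fin 4 ↪o Fin N) × Fin 3, p.1 ∘ pairing p.2 = ![a, b, c, d] by
    obtain ⟨p, hp⟩ := this
    refine mem_union_right _ (mem_image.2 ⟨p, by simpa [confusions, hp], ?_⟩)
    simpa using congrFun hp 3
  rcases lt_or_gt_of_ne hbc with hbc | hcb
  · exact ⟨(OrderEmbedding.ofStrictMono ![a, b, c, d] (by simp [*]), 0), by
      ext i; fin_cases i <;> rfl⟩
  rcases lt_or_gt_of_ne hbd with hbd | hdb
  · exact ⟨(OrderEmbedding.ofStrictMono ![a, c, b, d] (by simp [*]), 1), by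
      ext i; fin_cases i <;> rfl⟩
  · exact ⟨(OrderEmbedding.ofStrictMono ![a, c, d, b] (by simp [*]), 2), by
      ext i; fin_cases i <;> rfl⟩

theorem exists_mem_deleted_of_confusable {f : Fin N → κ → α} {a b c d : Fin N}
    (hab : a ≠ b) (hcd : c ≠ d) (hac : a ≠ c) (had : a ≠ d) (hbc : b ≠ c) (hbd : b ≠ d)
    (h : Confusable f ![a, b, c, d]) :
    a ∈ deleted f ∨ b ∈ deleted f ∨ c ∈ deleted f ∨ d ∈ deleted f := by
  wlog hab' : a < b generalizing a b
  · have := this hab.symm hbc hbd hac had h.swap_left (hab.symm.lt_of_le (not_lt.1 hab'))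
    tauto
  wlog hcd' : c < d generalizing c d
  · have := this hcd.symm had hac hbd hbc h.swap_right (hcd.symm.lt_of_le (not_lt.1 hcd'))
    tauto
  wlog hac' : a < c generalizing a b c d
  · have := this hcd hcd' hab hac.symm hbc.symm had.symm hbd.symm h.symm hab'
      (hac.symm.lt_of_le (not_lt.1 hac'))
    tauto
  exact Or.inr <| Or.inr <| Or.inr <| mem_deleted_of_confusable_of_lt hab' hcd' hac' hbc hbd h

section Counting

variable [Fintype κ] [Fintype α]

theorem sum_card_deleted_mul_le :
    ∑ f : Fin N → κ → α, #(deleted f) * Fintype.card (κ → α) ^ 2 ≤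
      (N.choose 2 * Fintype.card (κ → α) + 3 * N.choose 4 * 2 ^ Fintype.card κ) *
        Fintype.card (κ → α) ^ N := by
  set Q := Fintype.card (κ → α)
  have hcoll : ∑ f : Fin N → κ → α, #(collisions f) * Q ≤ N.choose 2 * Q ^ N := by
    have := sum_card_filter_mul_le (fun (f : Fin N → κ → α) (e : Fin 2 ↪o Fin N) =>
      f (e 0) = f (e 1)) (m := Q) (b := Q ^ N) fun e => by
        simpa only [Fintype.card_fin] using
          card_filter_apply_eq_mul_le (β := κ → α) (e.injective.ne (by decide))
    rwa [Fintype.card_orderEmbedding_fin] at this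
  have hconf : ∑ f : Fin N → κ → α, #(confusions f) * Q ^ 2 ≤
      N.choose 4 * 3 * (2 ^ Fintype.card κ * Q ^ N) := by
    have := sum_card_filter_mul_le (fun (f : Fin N → κ → α) (p : (Fin 4 ↪o Fin N) × Fin 3) =>
      Confusable f (p.1 ∘ pairing p.2)) (m := Q ^ 2) (b := 2 ^ Fintype.card κ * Q ^ N)
      fun p => by
        simpa only [Fintype.card_fin] using
          card_filter_confusable_mul_le (p.1.injective.comp (pairing_injective p.2))
    rwa [Fintype.card_prod, Fintype.card_orderEmbedding_fin, Fintype.card_fin] at this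
  calc ∑ f : Fin N → κ → α, #(deleted f) * Q ^ 2
      ≤ ∑ f : Fin N → κ → α, (Q * (#(collisions f) * Q) + #(confusions f) * Q ^ 2) :=
        sum_le_sum fun f _ => by nlinarith [card_deleted_le f]
    _ = Q * ∑ f : Fin N → κ → α, #(collisions f) * Q +
          ∑ f : Fin N → κ → α, #(confusions f) * Q ^ 2 := by rw [sum_add_distrib, mul_sum]
    _ ≤ Q * (N.choose 2 * Q ^ N) + N.choose 4 * 3 * (2 ^ Fintype.card κ * Q ^ N) := by
        gcongr
    _ = _ := by ring

theorem exists_card_deleted_mul_le [Nonempty α] :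
    ∃ f : Fin N → κ → α, #(deleted f) * Fintype.card (κ → α) ^ 2 ≤
      N.choose 2 * Fintype.card (κ → α) + 3 * N.choose 4 * 2 ^ Fintype.card κ := by
  obtain ⟨f, -, hf⟩ := exists_le_of_sum_le univ_nonempty <|
    (sum_card_deleted_mul_le (N := N) (κ := κ) (α := α)).trans_eq <| by
    rw [sum_const, card_univ, Fintype.card_fun (α := Fin N), Fintype.card_fin, smul_eq_mul,
      mul_comm]
  exact ⟨f, hf⟩

theorem exists_card_deleted_le [Nonempty α] :
    ∃ f : Fin N → κ → α, (#(deleted f) : ℝ) ≤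
      N.choose 2 / (Fintype.card α : ℝ) ^ Fintype.card κ +
        3 * N.choose 4 * 2 ^ Fintype.card κ / (Fintype.card α : ℝ) ^ (2 * Fintype.card κ) := by
  obtain ⟨f, hf⟩ := exists_card_deleted_mul_le (N := N) (κ := κ) (α := α)
  refine ⟨f, ?_⟩
  set Q : ℝ := (Fintype.card α : ℝ) ^ Fintype.card κ
  have hQ : 0 < Q := by positivity
  have hf' : (#(deleted f) : ℝ) * Q ^ 2 ≤
      N.choose 2 * Q + 3 * N.choose 4 * 2 ^ Fintype.card κ := by
    simpa [Q] using (Nat.cast_le (α := ℝ)).2 hf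
  calc (#(deleted f) : ℝ) = #(deleted f) * Q ^ 2 / Q ^ 2 := by field_simp
    _ ≤ (N.choose 2 * Q + 3 * N.choose 4 * 2 ^ Fintype.card κ) / Q ^ 2 := by gcongr
    _ = _ := by rw [mul_comm 2, pow_mul]; field_simp; simp only [Q]; ring

end Counting

theorem isSeparable2_image_compl_deleted (f : Fin N → Fin n → F) :
    IsSeparable2 ((univ \ deleted f).image f) := by
  refine IsSeparable2.of_forall_exists_pair_apply_ne ?_
  simp only [mem_image, mem_sdiff, mem_univ, true_and]
  rintro _ ⟨i, hi, rfl⟩ _ ⟨j, hj, rfl⟩ _ ⟨k, hk, rfl⟩ _ ⟨l, hl, rfl⟩ hij hkl hik hil hjk hjl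
  by_contra! hconf
  have := exists_mem_deleted_of_confusable (ne_of_apply_ne f hij) (ne_of_apply_ne f hkl)
    (ne_of_apply_ne f hik) (ne_of_apply_ne f hil) (ne_of_apply_ne f hjk) (ne_of_apply_ne f hjl)
    (f := f) fun c => by simpa using hconf c
  tauto

theorem card_image_compl_deleted (f : Fin N → Fin n → F) :
    #((univ \ deleted f).image f) = N - #(deleted f) := by
  have hinj : Set.InjOn f (univ \ deleted f : Finset (Fin N)) := fun i hi j hj h => by
    by_contra hij
    simp only [coe_sdiff, coe_univ, Set.mem_sdiff, Set.mem_univ, mem_coe, true_and] at hi hj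
    exact (mem_deleted_of_apply_eq hij h).elim hi hj
  rw [card_image_of_injOn hinj, card_univ_sdiff, Fintype.card_fin]

end SeparableCode

theorem separable2_exists_general {q n : ℕ} (hq : 2 ≤ q) (N : ℕ)
    (F : Type*) [Fintype F] (hF : Fintype.card F = q) :
    ∃ C : Finset (Fin n → F),
      (∀ X X' : Finset (Fin n → F), X ⊆ C → X' ⊆ C →
        X.Nonempty → X'.Nonempty → X.card ≤ 2 → X'.card ≤ 2 → X ≠ X' →
        desc (X : Set (Fin n → F)) ≠ desc (X' : Set (Fin n → F))) ∧
      (N : ℝ) - (⌊(N.choose 2 : ℝ) / (q : ℝ) ^ n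
          + 3 * (N.choose 4 : ℝ) * 2 ^ n / (q : ℝ) ^ (2 * n)⌋ : ℤ) ≤ C.card := by
  subst hF
  have : Nonempty F := Fintype.card_pos_iff.1 (by omega)
  obtain ⟨f, hf⟩ := SeparableCode.exists_card_deleted_le (N := N) (κ := Fin n) (α := F)
  refine ⟨_, SeparableCode.isSeparable2_image_compl_deleted f, ?_⟩
  rw [SeparableCode.card_image_compl_deleted,
    Nat.cast_sub ((card_le_univ _).trans_eq (Fintype.card_fin N))]
  rw [Fintype.card_fin] at hf
  have hfloor := Int.le_floor.2 (show ((#(SeparableCode.deleted f) : ℤ) : ℝ) ≤ _ by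
    exact_mod_cast hf)
  have hfloor' := (Int.cast_le (R := ℝ)).2 hfloor
  push_cast at hfloor' ⊢
  linarith

theorem separable2_exists {q n : ℕ} (hq : 2 ≤ q) (hn : 2 ≤ n) (N : ℕ)
    (F : Type*) [Fintype F] (hF : Fintype.card F = q) :
    ∃ C : Finset (Fin n → F),
      (∀ X X' : Finset (Fin n → F), X ⊆ C → X' ⊆ C →
        X.Nonempty → X'.Nonempty → X.card ≤ 2 → X'.card ≤ 2 → X ≠ X' →
        desc (X : Set (Fin n → F)) ≠ desc (X' : Set (Fin n → F))) ∧
      (N : ℝ) - (⌊(N.choose 2 : ℝ) / (q : ℝ) ^ n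
          + 3 * (N.choose 4 : ℝ) * 2 ^ n / (q : ℝ) ^ (2 * n)⌋ : ℤ) ≤ C.card :=
  separable2_exists_general hq N F hF
end

section
/- For each n ≥ 2 there exists a constant κ > 0 (depending only on n) such that for all sufficiently large integers q there is a q-ary 2̄-separable code of length n with at least κ·q^{2n/3} codewords. -/
set_option maxHeartbeats 2000000

open Finset

namespace SepAux

lemma fiber_count {α β : Type*} [Fintype α] [DecidableEq α] [Fintype β] [DecidableEq β]
    (s : Finset α) (t : α → β) :
    ((univ : Finset (α → β)).filter (fun f => ∀ i ∈ s, f i = t i)).card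
      * Fintype.card β ^ s.card = Fintype.card β ^ Fintype.card α := by
  classical
  induction s using Finset.induction_on with
  | empty => simp [Fintype.card_fun]
  | @insert a s ha ih =>
    set K := Fintype.card β with hK
    set E := (univ : Finset (α → β)).filter (fun f => ∀ i ∈ s, f i = t i) with hE
    have hfib : ∀ u : β, (E.filter (fun f => f a = u)).card
        = (E.filter (fun f => f a = t a)).card := by
      intro u
      apply Finset.card_bij (i := fun f _ => Function.update f a (t a))
      · intro f hf
        simp only [hE, mem_filter, mem_univ, true_and] at hf ⊢
        refine ⟨fun i hi => ?_, ?_⟩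
        · rw [Function.update_of_ne (by rintro rfl; exact ha hi)]
          exact hf.1 i hi
        · simp
      · intro f₁ hf₁ f₂ hf₂ h
        simp only [hE, mem_filter, mem_univ, true_and] at hf₁ hf₂
        funext i
        by_cases hia : i = a
        · subst hia; rw [hf₁.2, hf₂.2]
        · have := congrFun h i
          rwa [Function.update_of_ne hia, Function.update_of_ne hia] at this
      · intro g hg
        simp only [hE, mem_filter, mem_univ, true_and] at hg
        refine ⟨Function.update g a u, ?_, ?_⟩
        · simp only [hE, mem_filter, mem_univ, true_and]
          refine ⟨fun i hi => ?_, ?_⟩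
          · rw [Function.update_of_ne (by rintro rfl; exact ha hi)]
            exact hg.1 i hi
          · simp
        · funext i
          by_cases hia : i = a
          · subst hia; simp [hg.2]
          · simp [Function.update_of_ne hia]
    have hsum : E.card = ∑ u : β, (E.filter (fun f => f a = u)).card :=
      Finset.card_eq_sum_card_fiberwise (fun f _ => mem_univ (f a))
    have hEcard : E.card = K * (E.filter (fun f => f a = t a)).card := by
      rw [hsum, Finset.sum_congr rfl (fun u _ => hfib u)]
      simp [card_univ, hK, mul_comm]
    have hins : E.filter (fun f => f a = t a)
        = (univ : Finset (α → β)).filter (fun f => ∀ i ∈ insert a s, f i = t i) := by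
      ext f
      simp only [hE, mem_filter, mem_univ, true_and, Finset.forall_mem_insert]
      exact and_comm
    rw [card_insert_of_notMem ha, ← hins, pow_succ]
    calc (E.filter (fun f => f a = t a)).card * (K ^ s.card * K)
        = (K * (E.filter (fun f => f a = t a)).card) * K ^ s.card := by ring
      _ = E.card * K ^ s.card := by rw [← hEcard]
      _ = K ^ Fintype.card α := ih


lemma pair_count {α β : Type*} [Fintype α] [DecidableEq α] [Fintype β] [DecidableEq β]
    (i j : α) (hij : i ≠ j) :
    ((univ : Finset (α → β)).filter (fun f => f i = f j)).card * Fintype.card β ^ 2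
      ≤ Fintype.card β ^ Fintype.card α * Fintype.card β := by
  classical
  set K := Fintype.card β with hK
  have hsum : (univ.filter (fun f : α → β => f i = f j)).card
      = ∑ u : β, ((univ.filter (fun f : α → β => f i = f j)).filter (fun f => f i = u)).card :=
    Finset.card_eq_sum_card_fiberwise (fun f _ => mem_univ (f i))
  have hfib : ∀ u : β,
      ((univ.filter (fun f : α → β => f i = f j)).filter (fun f => f i = u)).card * K ^ 2
        ≤ K ^ Fintype.card α := by
    intro u
    have hsub : ((univ.filter (fun f : α → β => f i = f j)).filter (fun f => f i = u))
        ⊆ univ.filter (fun f : α → β => ∀ l ∈ ({i, j} : Finset α), f l = (fun _ => u) l) := by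
      intro f hf
      simp only [mem_filter, mem_univ, true_and] at hf ⊢
      intro l hl
      rcases Finset.mem_insert.mp hl with rfl | hl'
      · exact hf.2
      · rw [Finset.mem_singleton] at hl'; subst hl'
        rw [← hf.1]; exact hf.2
    have h2 : ({i, j} : Finset α).card = 2 := by
      rw [card_insert_of_notMem (by simpa using hij), card_singleton]
    have := fiber_count (α := α) (β := β) ({i, j} : Finset α) (fun _ => u)
    rw [h2] at this
    calc ((univ.filter (fun f : α → β => f i = f j)).filter (fun f => f i = u)).card * K ^ 2
        ≤ (univ.filter (fun f : α → β => ∀ l ∈ ({i, j} : Finset α), f l = (fun _ => u) l)).card * K ^ 2 :=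
          Nat.mul_le_mul_right _ (Finset.card_le_card hsub)
      _ = K ^ Fintype.card α := this
  calc (univ.filter (fun f : α → β => f i = f j)).card * K ^ 2
      = ∑ u : β, ((univ.filter (fun f : α → β => f i = f j)).filter (fun f => f i = u)).card * K ^ 2 := by
        rw [hsum, Finset.sum_mul]
    _ ≤ ∑ _u : β, K ^ Fintype.card α := Finset.sum_le_sum (fun u _ => hfib u)
    _ = K ^ Fintype.card α * K := by simp [mul_comm, hK]


def Bad4 {n q : ℕ} (a b c d : Fin n → Fin q) : Prop :=
  c ≠ a ∧ c ≠ b ∧ (∀ k, c k = a k ∨ c k = b k) ∧ (∀ k, d k = a k ∨ d k = b k) ∧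
  (∀ k, a k = c k ∨ a k = d k) ∧ (∀ k, b k = c k ∨ b k = d k)

instance {n q : ℕ} (a b c d : Fin n → Fin q) : Decidable (Bad4 a b c d) := by
  unfold Bad4; infer_instance

namespace Bad4

variable {n q : ℕ} {a b c d : Fin n → Fin q}

lemma nca (h : Bad4 a b c d) : c ≠ a := h.1
lemma ncb (h : Bad4 a b c d) : c ≠ b := h.2.1

lemma nab (h : Bad4 a b c d) : a ≠ b := by
  intro hab
  exact h.1 (funext fun k => (h.2.2.1 k).elim id (fun h' => h'.trans (congrFun hab.symm k)))

lemma ncd (h : Bad4 a b c d) : c ≠ d := by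
  intro hcd
  apply h.1
  apply funext fun k => ?_
  rcases h.2.2.2.2.1 k with h' | h'
  · exact h'.symm
  · rw [← hcd] at h'; exact h'.symm

lemma nda (h : Bad4 a b c d) : d ≠ a := by
  intro hda
  apply h.2.1
  apply funext fun k => ?_
  rcases h.2.2.2.2.2 k with h' | h'
  · exact h'.symm
  · rw [hda] at h'
    rcases h.2.2.1 k with h2 | h2
    · exact h2.trans h'.symm
    · exact h2
lemma ndb (h : Bad4 a b c d) : d ≠ b := by
  intro hdb
  apply h.1
  apply funext fun k => ?_
  rcases h.2.2.2.2.1 k with h' | h'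
  · exact h'.symm
  · rw [hdb] at h'
    rcases h.2.2.1 k with h2 | h2
    · exact h2
    · exact h2.trans h'.symm

lemma d_eq (h : Bad4 a b c d) (k : Fin n) :
    d k = if c k = a k then b k else a k := by
  by_cases h' : c k = a k
  · rw [if_pos h']
    rcases h.2.2.2.2.2 k with h1 | h1
    · rcases h.2.2.2.1 k with h2 | h2
      · rw [h2, ← h', ← h1]
      · exact h2
    · exact h1.symm
  · rw [if_neg h']
    rcases h.2.2.2.2.1 k with h1 | h1
    · exact absurd h1.symm h'
    · exact h1.symm

end Bad4

lemma badset_card {n q : ℕ} :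
    (((univ : Finset (((Fin n → Fin q) × (Fin n → Fin q)) × (Fin n → Fin q) × (Fin n → Fin q)))).filter
      (fun v => Bad4 v.1.1 v.1.2 v.2.1 v.2.2)).card ≤ 2 ^ n * (q ^ n) ^ 2 := by
  classical
  have hinj := Finset.card_le_card_of_injOn
    (f := fun v : ((Fin n → Fin q) × (Fin n → Fin q)) × (Fin n → Fin q) × (Fin n → Fin q) =>
      ((v.1.1, v.1.2), (fun k => decide (v.2.1 k = v.1.1 k) : Fin n → Bool)))
    (s := ((univ : Finset (((Fin n → Fin q) × (Fin n → Fin q)) × (Fin n → Fin q) × (Fin n → Fin q)))).filter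
      (fun v => Bad4 v.1.1 v.1.2 v.2.1 v.2.2))
    (t := univ) (fun v _ => mem_univ _) ?_
  · calc _ ≤ (univ : Finset (((Fin n → Fin q) × (Fin n → Fin q)) × (Fin n → Bool))).card := hinj
      _ = 2 ^ n * (q ^ n) ^ 2 := by
        simp [card_univ, Fintype.card_fun]
        ring
  · intro v1 hv1 v2 hv2 heq
    simp only [mem_coe, mem_filter, mem_univ, true_and] at hv1 hv2
    obtain ⟨⟨a1, b1⟩, c1, d1⟩ := v1
    obtain ⟨⟨a2, b2⟩, c2, d2⟩ := v2
    simp only at hv1 hv2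
    simp only [Prod.mk.injEq] at heq ⊢
    obtain ⟨⟨hab, hbb⟩, hs⟩ := heq
    subst hab; subst hbb
    have hc : c1 = c2 := by
      funext k
      have hk := congrFun hs k
      simp only [decide_eq_decide] at hk
      by_cases h1 : c1 k = a1 k
      · rw [h1, ← hk.mp h1]
      · have h2 : ¬ (c2 k = a1 k) := fun h => h1 (hk.mpr h)
        rcases hv1.2.2.1 k with h3 | h3
        · exact absurd h3 h1
        · rcases hv2.2.2.1 k with h4 | h4
          · exact absurd h4 h2
          · rw [h3, h4]
    have hd : d1 = d2 := by
      funext k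
      rw [hv1.d_eq k, hv2.d_eq k, hc]
    exact ⟨⟨rfl, rfl⟩, hc, hd⟩


lemma exists_good_fun {n q M : ℕ} (hM1 : 1 ≤ M) (hq : 1 ≤ q)
    (hI1 : 4 * M ≤ q ^ n) (hI2 : 4 * (2 ^ n * M ^ 3) ≤ (q ^ n) ^ 2) :
    ∃ f : Fin M → (Fin n → Fin q),
      2 * ((((univ : Finset (Fin M × Fin M)).filter
              (fun p => p.1 ≠ p.2 ∧ f p.1 = f p.2)).card)
         + (((univ : Finset ((Fin M × Fin M) × Fin M × Fin M)).filter
             (fun v => Bad4 (f v.1.1) (f v.1.2) (f v.2.1) (f v.2.2))).card)) ≤ M := by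
  classical
  set N := q ^ n with hN
  have hq0 : 0 < q := hq
  have hNpos : 0 < N := by positivity
  have hcW : Fintype.card (Fin n → Fin q) = N := by
    simp [Fintype.card_fun, hN]
  -- per-pair bound
  have hpair : ∀ p : Fin M × Fin M,
      ((univ : Finset (Fin M → Fin n → Fin q)).filter
          (fun f => p.1 ≠ p.2 ∧ f p.1 = f p.2)).card * N ^ 2
        ≤ N ^ M * N := by
    intro p
    by_cases hp : p.1 = p.2
    · have hempty : (univ : Finset (Fin M → Fin n → Fin q)).filter
          (fun f => p.1 ≠ p.2 ∧ f p.1 = f p.2) = ∅ := by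
        apply Finset.filter_eq_empty_iff.mpr
        intro f _
        simp [hp]
      rw [hempty]
      simp
    · have heqf : (univ : Finset (Fin M → Fin n → Fin q)).filter
          (fun f => p.1 ≠ p.2 ∧ f p.1 = f p.2)
          = (univ : Finset (Fin M → Fin n → Fin q)).filter (fun f => f p.1 = f p.2) := by
        apply Finset.filter_congr
        intro f _
        simp [hp]
      rw [heqf]
      have h := pair_count (α := Fin M) (β := Fin n → Fin q) p.1 p.2 hp
      rwa [hcW, Fintype.card_fin] at h
  -- per-quadruple bound
  have hquad : ∀ v : (Fin M × Fin M) × Fin M × Fin M,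
      ((univ : Finset (Fin M → Fin n → Fin q)).filter
          (fun f => Bad4 (f v.1.1) (f v.1.2) (f v.2.1) (f v.2.2))).card * N ^ 4
        ≤ (2 ^ n * N ^ 2) * N ^ M := by
    intro v
    obtain ⟨⟨i1, i2⟩, i3, i4⟩ := v
    by_cases hdist : i1 ≠ i2 ∧ i1 ≠ i3 ∧ i1 ≠ i4 ∧ i2 ≠ i3 ∧ i2 ≠ i4 ∧ i3 ≠ i4
    · obtain ⟨h12, h13, h14, h23, h24, h34⟩ := hdist
      set E := (univ : Finset (Fin M → Fin n → Fin q)).filter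
          (fun f => Bad4 (f i1) (f i2) (f i3) (f i4)) with hE
      set BS := ((univ : Finset (((Fin n → Fin q) × (Fin n → Fin q)) × (Fin n → Fin q) × (Fin n → Fin q)))).filter
          (fun t => Bad4 t.1.1 t.1.2 t.2.1 t.2.2) with hBS
      have hmap : ∀ f ∈ E, ((f i1, f i2), (f i3, f i4)) ∈ BS := by
        intro f hf
        simp only [hE, mem_filter, mem_univ, true_and] at hf
        simp only [hBS, mem_filter, mem_univ, true_and]
        exact hf
      have hsum := Finset.card_eq_sum_card_fiberwise hmap
      have hfib : ∀ t ∈ BS,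
          (E.filter (fun f => ((f i1, f i2), (f i3, f i4)) = t)).card * N ^ 4 ≤ N ^ M := by
        intro t ht
        obtain ⟨⟨ta, tb⟩, tc, td⟩ := t
        set tfun : Fin M → (Fin n → Fin q) :=
          fun i => if i = i1 then ta else if i = i2 then tb else if i = i3 then tc else td
          with htfun
        have hsub : E.filter (fun f => ((f i1, f i2), (f i3, f i4)) = ((ta, tb), tc, td))
            ⊆ (univ : Finset (Fin M → Fin n → Fin q)).filter
                (fun f => ∀ i ∈ ({i1, i2, i3, i4} : Finset (Fin M)), f i = tfun i) := by
          intro f hf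
          simp only [hE, mem_filter, mem_univ, true_and, Prod.mk.injEq] at hf ⊢
          obtain ⟨-, ⟨hf1, hf2⟩, hf3, hf4⟩ := hf
          intro i hi
          simp only [mem_insert, mem_singleton] at hi
          rcases hi with rfl | rfl | rfl | rfl
          · rw [htfun]; simp only [if_pos rfl]; exact hf1
          · rw [htfun]; simp only [if_neg (Ne.symm h12), if_pos rfl]; exact hf2
          · rw [htfun]; simp only [if_neg (Ne.symm h13), if_neg (Ne.symm h23), if_pos rfl]
            exact hf3
          · rw [htfun]; simp only [if_neg (Ne.symm h14), if_neg (Ne.symm h24),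
              if_neg (Ne.symm h34)]
            exact hf4
        have hc4 : ({i1, i2, i3, i4} : Finset (Fin M)).card = 4 := by
          rw [card_insert_of_notMem (by simp [h12, h13, h14]),
              card_insert_of_notMem (by simp [h23, h24]),
              card_insert_of_notMem (by simp [h34]), card_singleton]
        have hfc := fiber_count ({i1, i2, i3, i4} : Finset (Fin M)) tfun
        rw [hc4, hcW, Fintype.card_fin] at hfc
        calc (E.filter (fun f => ((f i1, f i2), (f i3, f i4)) = ((ta, tb), tc, td))).card * N ^ 4
            ≤ ((univ : Finset (Fin M → Fin n → Fin q)).filter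
                (fun f => ∀ i ∈ ({i1, i2, i3, i4} : Finset (Fin M)), f i = tfun i)).card * N ^ 4 :=
              Nat.mul_le_mul_right _ (card_le_card hsub)
          _ = N ^ M := by
              convert hfc using 4
      calc E.card * N ^ 4
          = (∑ t ∈ BS, (E.filter (fun f => ((f i1, f i2), (f i3, f i4)) = t)).card) * N ^ 4 := by
            rw [← hsum]
        _ = ∑ t ∈ BS, (E.filter (fun f => ((f i1, f i2), (f i3, f i4)) = t)).card * N ^ 4 :=
            Finset.sum_mul _ _ _
        _ ≤ ∑ _t ∈ BS, N ^ M := Finset.sum_le_sum hfib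
        _ = BS.card * N ^ M := by rw [Finset.sum_const, smul_eq_mul]
        _ ≤ (2 ^ n * N ^ 2) * N ^ M :=
            Nat.mul_le_mul_right _ (by simpa [hN] using badset_card (n := n) (q := q))
    · have hempty : (univ : Finset (Fin M → Fin n → Fin q)).filter
          (fun f => Bad4 (f i1) (f i2) (f i3) (f i4)) = ∅ := by
        apply Finset.filter_eq_empty_iff.mpr
        intro f _
        intro hbad
        push_neg at hdist
        by_cases e12 : i1 = i2
        · exact hbad.nab (congrArg f e12)
        by_cases e13 : i1 = i3
        · exact hbad.nca (congrArg f e13).symm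
        by_cases e14 : i1 = i4
        · exact hbad.nda (congrArg f e14).symm
        by_cases e23 : i2 = i3
        · exact hbad.ncb (congrArg f e23).symm
        by_cases e24 : i2 = i4
        · exact hbad.ndb (congrArg f e24).symm
        · exact hbad.ncd (congrArg f (hdist e12 e13 e14 e23 e24))
      rw [hempty]
      simp
  -- swap sums
  have hswapA : (∑ f : Fin M → Fin n → Fin q,
      ((univ : Finset (Fin M × Fin M)).filter (fun p => p.1 ≠ p.2 ∧ f p.1 = f p.2)).card)
      = ∑ p : Fin M × Fin M,
        ((univ : Finset (Fin M → Fin n → Fin q)).filter (fun f => p.1 ≠ p.2 ∧ f p.1 = f p.2)).card := by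
    simp_rw [Finset.card_filter]
    rw [Finset.sum_comm]
  have hswapB : (∑ f : Fin M → Fin n → Fin q,
      ((univ : Finset ((Fin M × Fin M) × Fin M × Fin M)).filter
        (fun v => Bad4 (f v.1.1) (f v.1.2) (f v.2.1) (f v.2.2))).card)
      = ∑ v : (Fin M × Fin M) × Fin M × Fin M,
        ((univ : Finset (Fin M → Fin n → Fin q)).filter
          (fun f => Bad4 (f v.1.1) (f v.1.2) (f v.2.1) (f v.2.2))).card := by
    simp_rw [Finset.card_filter]
    rw [Finset.sum_comm]
  -- total bounds
  have hSA : (∑ f : Fin M → Fin n → Fin q,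
      ((univ : Finset (Fin M × Fin M)).filter (fun p => p.1 ≠ p.2 ∧ f p.1 = f p.2)).card) * N ^ 2
      ≤ M ^ 2 * (N ^ M * N) := by
    rw [hswapA, Finset.sum_mul]
    calc (∑ p : Fin M × Fin M, ((univ : Finset (Fin M → Fin n → Fin q)).filter
            (fun f => p.1 ≠ p.2 ∧ f p.1 = f p.2)).card * N ^ 2)
        ≤ ∑ _p : Fin M × Fin M, N ^ M * N := Finset.sum_le_sum (fun p _ => hpair p)
      _ = M ^ 2 * (N ^ M * N) := by
          rw [Finset.sum_const, smul_eq_mul, card_univ]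
          simp only [Fintype.card_prod, Fintype.card_fin]
          ring
  have hSB : (∑ f : Fin M → Fin n → Fin q,
      ((univ : Finset ((Fin M × Fin M) × Fin M × Fin M)).filter
        (fun v => Bad4 (f v.1.1) (f v.1.2) (f v.2.1) (f v.2.2))).card) * N ^ 4
      ≤ M ^ 4 * ((2 ^ n * N ^ 2) * N ^ M) := by
    rw [hswapB, Finset.sum_mul]
    calc (∑ v : (Fin M × Fin M) × Fin M × Fin M,
            ((univ : Finset (Fin M → Fin n → Fin q)).filter
              (fun f => Bad4 (f v.1.1) (f v.1.2) (f v.2.1) (f v.2.2))).card * N ^ 4)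
        ≤ ∑ _v : (Fin M × Fin M) × Fin M × Fin M, (2 ^ n * N ^ 2) * N ^ M :=
          Finset.sum_le_sum (fun v _ => hquad v)
      _ = M ^ 4 * ((2 ^ n * N ^ 2) * N ^ M) := by
          rw [Finset.sum_const, smul_eq_mul, card_univ]
          simp only [Fintype.card_prod, Fintype.card_fin]
          ring
  -- combine into the average bound
  have htotal : (∑ f : Fin M → Fin n → Fin q,
      2 * ((((univ : Finset (Fin M × Fin M)).filter (fun p => p.1 ≠ p.2 ∧ f p.1 = f p.2)).card)
         + (((univ : Finset ((Fin M × Fin M) × Fin M × Fin M)).filter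
             (fun v => Bad4 (f v.1.1) (f v.1.2) (f v.2.1) (f v.2.2))).card)) * N ^ 4)
      ≤ (M * N ^ 4) * N ^ M := by
    calc (∑ f : Fin M → Fin n → Fin q,
        2 * ((((univ : Finset (Fin M × Fin M)).filter (fun p => p.1 ≠ p.2 ∧ f p.1 = f p.2)).card)
           + (((univ : Finset ((Fin M × Fin M) × Fin M × Fin M)).filter
               (fun v => Bad4 (f v.1.1) (f v.1.2) (f v.2.1) (f v.2.2))).card)) * N ^ 4)
        = ∑ f : Fin M → Fin n → Fin q,
            (2 * N ^ 2 * ((((univ : Finset (Fin M × Fin M)).filter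
                (fun p => p.1 ≠ p.2 ∧ f p.1 = f p.2)).card) * N ^ 2)
            + 2 * ((((univ : Finset ((Fin M × Fin M) × Fin M × Fin M)).filter
               (fun v => Bad4 (f v.1.1) (f v.1.2) (f v.2.1) (f v.2.2))).card * N ^ 4))) :=
          Finset.sum_congr rfl (fun f _ => by ring)
      _ = (∑ f : Fin M → Fin n → Fin q,
            2 * N ^ 2 * ((((univ : Finset (Fin M × Fin M)).filter
                (fun p => p.1 ≠ p.2 ∧ f p.1 = f p.2)).card) * N ^ 2))
          + (∑ f : Fin M → Fin n → Fin q,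
            2 * ((((univ : Finset ((Fin M × Fin M) × Fin M × Fin M)).filter
               (fun v => Bad4 (f v.1.1) (f v.1.2) (f v.2.1) (f v.2.2))).card * N ^ 4))) :=
          Finset.sum_add_distrib
      _ = 2 * N ^ 2 * (∑ f : Fin M → Fin n → Fin q,
            (((univ : Finset (Fin M × Fin M)).filter
                (fun p => p.1 ≠ p.2 ∧ f p.1 = f p.2)).card) * N ^ 2)
          + 2 * (∑ f : Fin M → Fin n → Fin q,
            (((univ : Finset ((Fin M × Fin M) × Fin M × Fin M)).filter
               (fun v => Bad4 (f v.1.1) (f v.1.2) (f v.2.1) (f v.2.2))).card * N ^ 4)) := by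
          simp only [Finset.mul_sum]
      _ = 2 * N ^ 2 * ((∑ f : Fin M → Fin n → Fin q,
            (((univ : Finset (Fin M × Fin M)).filter
                (fun p => p.1 ≠ p.2 ∧ f p.1 = f p.2)).card)) * N ^ 2)
          + 2 * ((∑ f : Fin M → Fin n → Fin q,
            (((univ : Finset ((Fin M × Fin M) × Fin M × Fin M)).filter
               (fun v => Bad4 (f v.1.1) (f v.1.2) (f v.2.1) (f v.2.2))).card)) * N ^ 4) := by
          simp only [Finset.sum_mul]
      _ ≤ (M * N ^ 4) * N ^ M := by
          have b1 : 2 * N ^ 2 * ((∑ f : Fin M → Fin n → Fin q,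
              (((univ : Finset (Fin M × Fin M)).filter
                  (fun p => p.1 ≠ p.2 ∧ f p.1 = f p.2)).card)) * N ^ 2)
              ≤ 2 * N ^ 2 * (M ^ 2 * (N ^ M * N)) := Nat.mul_le_mul_left _ hSA
          have b2 : 2 * ((∑ f : Fin M → Fin n → Fin q,
              (((univ : Finset ((Fin M × Fin M) × Fin M × Fin M)).filter
                 (fun v => Bad4 (f v.1.1) (f v.1.2) (f v.2.1) (f v.2.2))).card)) * N ^ 4)
              ≤ 2 * (M ^ 4 * ((2 ^ n * N ^ 2) * N ^ M)) := Nat.mul_le_mul_left _ hSB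
          have c1 : 4 * (2 * N ^ 2 * (M ^ 2 * (N ^ M * N))) ≤ 2 * ((M * N ^ 4) * N ^ M) := by
            have e2 : 4 * (2 * N ^ 2 * (M ^ 2 * (N ^ M * N)))
                = (4 * M) * (2 * (M * (N ^ 3 * N ^ M))) := by ring
            have e3 : 2 * ((M * N ^ 4) * N ^ M) = N * (2 * (M * (N ^ 3 * N ^ M))) := by ring
            rw [e2, e3]
            exact Nat.mul_le_mul_right _ hI1
          have c2 : 4 * (2 * (M ^ 4 * ((2 ^ n * N ^ 2) * N ^ M))) ≤ 2 * ((M * N ^ 4) * N ^ M) := by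
            have e2 : 4 * (2 * (M ^ 4 * ((2 ^ n * N ^ 2) * N ^ M)))
                = (4 * (2 ^ n * M ^ 3)) * (2 * (M * (N ^ 2 * N ^ M))) := by ring
            have e3 : 2 * ((M * N ^ 4) * N ^ M) = N ^ 2 * (2 * (M * (N ^ 2 * N ^ M))) := by ring
            rw [e2, e3]
            exact Nat.mul_le_mul_right _ hI2
          refine Nat.le_of_mul_le_mul_left ?_ (show 0 < 4 by norm_num)
          calc 4 * (2 * N ^ 2 * ((∑ f : Fin M → Fin n → Fin q,
                (((univ : Finset (Fin M × Fin M)).filter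
                    (fun p => p.1 ≠ p.2 ∧ f p.1 = f p.2)).card)) * N ^ 2)
              + 2 * ((∑ f : Fin M → Fin n → Fin q,
                (((univ : Finset ((Fin M × Fin M) × Fin M × Fin M)).filter
                   (fun v => Bad4 (f v.1.1) (f v.1.2) (f v.2.1) (f v.2.2))).card)) * N ^ 4))
              = 4 * (2 * N ^ 2 * ((∑ f : Fin M → Fin n → Fin q,
                (((univ : Finset (Fin M × Fin M)).filter
                    (fun p => p.1 ≠ p.2 ∧ f p.1 = f p.2)).card)) * N ^ 2))
              + 4 * (2 * ((∑ f : Fin M → Fin n → Fin q,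
                (((univ : Finset ((Fin M × Fin M) × Fin M × Fin M)).filter
                   (fun v => Bad4 (f v.1.1) (f v.1.2) (f v.2.1) (f v.2.2))).card)) * N ^ 4)) := by
                ring
            _ ≤ 4 * (2 * N ^ 2 * (M ^ 2 * (N ^ M * N))) + 4 * (2 * (M ^ 4 * ((2 ^ n * N ^ 2) * N ^ M))) :=
                Nat.add_le_add (Nat.mul_le_mul_left _ b1) (Nat.mul_le_mul_left _ b2)
            _ ≤ 2 * ((M * N ^ 4) * N ^ M) + 2 * ((M * N ^ 4) * N ^ M) := Nat.add_le_add c1 c2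
            _ = 4 * ((M * N ^ 4) * N ^ M) := by ring
  -- average
  by_contra hcon
  push_neg at hcon
  have hlow : ∀ f : Fin M → Fin n → Fin q,
      (M * N ^ 4 + 1) ≤ 2 * ((((univ : Finset (Fin M × Fin M)).filter
              (fun p => p.1 ≠ p.2 ∧ f p.1 = f p.2)).card)
         + (((univ : Finset ((Fin M × Fin M) × Fin M × Fin M)).filter
             (fun v => Bad4 (f v.1.1) (f v.1.2) (f v.2.1) (f v.2.2))).card)) * N ^ 4 := by
    intro f
    have := hcon f
    have h1 : M + 1 ≤ 2 * ((((univ : Finset (Fin M × Fin M)).filter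
              (fun p => p.1 ≠ p.2 ∧ f p.1 = f p.2)).card)
         + (((univ : Finset ((Fin M × Fin M) × Fin M × Fin M)).filter
             (fun v => Bad4 (f v.1.1) (f v.1.2) (f v.2.1) (f v.2.2))).card)) := this
    have hN4 : 1 ≤ N ^ 4 := Nat.one_le_pow _ _ hNpos
    calc M * N ^ 4 + 1 ≤ M * N ^ 4 + N ^ 4 := Nat.add_le_add_left hN4 _
      _ = (M + 1) * N ^ 4 := by ring
      _ ≤ _ := Nat.mul_le_mul_right _ h1
  have hsum_lower := Finset.card_nsmul_le_sum (univ : Finset (Fin M → Fin n → Fin q)) _ _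
    (fun f _ => hlow f)
  have hcard_fn : Fintype.card (Fin M → Fin n → Fin q) = N ^ M := by
    rw [Fintype.card_fun, hcW, Fintype.card_fin]
  rw [card_univ, hcard_fn, smul_eq_mul] at hsum_lower
  have h2 := le_trans hsum_lower htotal
  have hNM : 1 ≤ N ^ M := Nat.one_le_pow _ _ hNpos
  have h3 : N ^ M * (M * N ^ 4 + 1) = M * N ^ 4 * N ^ M + N ^ M := by ring
  rw [h3] at h2
  have h4 : N ^ M ≤ 0 := by
    have h5 : M * N ^ 4 * N ^ M + N ^ M ≤ M * N ^ 4 * N ^ M + 0 := by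
      simpa using h2
    exact le_of_add_le_add_left h5
  exact absurd (le_trans hNM h4) (by norm_num)


lemma exists_code {n q M : ℕ} (hM1 : 1 ≤ M) (hq : 1 ≤ q)
    (hI1 : 4 * M ≤ q ^ n) (hI2 : 4 * (2 ^ n * M ^ 3) ≤ (q ^ n) ^ 2) :
    ∃ C : Finset (Fin n → Fin q),
      (∀ a ∈ C, ∀ b ∈ C, ∀ c ∈ C, ∀ d ∈ C, ¬ Bad4 a b c d) ∧ M ≤ 2 * C.card := by
  classical
  obtain ⟨f, hf⟩ := exists_good_fun hM1 hq hI1 hI2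
  set A := ((univ : Finset (Fin M × Fin M)).filter
      (fun p => p.1 ≠ p.2 ∧ f p.1 = f p.2)) with hA
  set B := ((univ : Finset ((Fin M × Fin M) × Fin M × Fin M)).filter
      (fun v => Bad4 (f v.1.1) (f v.1.2) (f v.2.1) (f v.2.2))) with hB
  set D1 := A.image Prod.snd with hD1
  set D2 := B.image (fun v => v.2.1) with hD2
  set I := (univ : Finset (Fin M)) \ (D1 ∪ D2) with hI
  set C := I.image f with hC
  have hinj : Set.InjOn f I := by
    intro i hi j hj hfe
    by_contra hne
    have hpA : (i, j) ∈ A := by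
      simp only [hA, mem_filter, mem_univ, true_and]
      exact ⟨hne, hfe⟩
    have hjD1 : j ∈ D1 := by
      rw [hD1]
      exact Finset.mem_image.mpr ⟨(i, j), hpA, rfl⟩
    have h2 : j ∉ D1 ∧ j ∉ D2 := by simpa [hI] using hj
    exact h2.1 hjD1
  have hCI : C.card = I.card := Finset.card_image_of_injOn hinj
  have hIcard : I.card = M - (D1 ∪ D2).card := by
    rw [hI, Finset.card_sdiff_of_subset (Finset.subset_univ _), card_univ, Fintype.card_fin]
  have hD12 : (D1 ∪ D2).card ≤ A.card + B.card :=
    le_trans (Finset.card_union_le _ _)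
      (Nat.add_le_add (Finset.card_image_le) (Finset.card_image_le))
  have hD12M : (D1 ∪ D2).card ≤ M := by
    calc (D1 ∪ D2).card ≤ (univ : Finset (Fin M)).card :=
          Finset.card_le_card (Finset.subset_univ _)
      _ = M := by rw [card_univ, Fintype.card_fin]
  refine ⟨C, ?_, ?_⟩
  · intro a ha b hb c hc d hd hbad
    obtain ⟨ia, hia, rfl⟩ := Finset.mem_image.mp ha
    obtain ⟨ib, hib, rfl⟩ := Finset.mem_image.mp hb
    obtain ⟨ic, hic, rfl⟩ := Finset.mem_image.mp hc
    obtain ⟨id, hid, rfl⟩ := Finset.mem_image.mp hd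
    have hvB : ((ia, ib), (ic, id)) ∈ B := by
      simp only [hB, mem_filter, mem_univ, true_and]
      exact hbad
    have hicD2 : ic ∈ D2 := by
      rw [hD2]
      exact Finset.mem_image.mpr ⟨((ia, ib), (ic, id)), hvB, rfl⟩
    have h2 : ic ∉ D1 ∧ ic ∉ D2 := by simpa [hI] using hic
    exact h2.2 hicD2
  · omega


lemma sep_of_noBad {n q : ℕ} {C : Finset (Fin n → Fin q)}
    (hC : ∀ a ∈ C, ∀ b ∈ C, ∀ c ∈ C, ∀ d ∈ C, ¬ Bad4 a b c d)
    {X X' : Finset (Fin n → Fin q)} (hXC : X ⊆ C) (hX'C : X' ⊆ C)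
    (hXne : X.Nonempty) (hX'ne : X'.Nonempty) (hX2 : X.card ≤ 2) (hX'2 : X'.card ≤ 2)
    (hne : X ≠ X') : desc (X : Set (Fin n → Fin q)) ≠ desc (X' : Set (Fin n → Fin q)) := by
  intro heq
  have hmemX : ∀ x ∈ X, ∀ k, ∃ y ∈ X', x k = y k := by
    intro x hx k
    have hxd : x ∈ desc (X : Set (Fin n → Fin q)) :=
      fun k' => ⟨x, Finset.mem_coe.mpr hx, rfl⟩
    rw [heq] at hxd
    obtain ⟨y, hy, hxy⟩ := hxd k
    exact ⟨y, Finset.mem_coe.mp hy, hxy⟩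
  have hmemX' : ∀ x ∈ X', ∀ k, ∃ y ∈ X, x k = y k := by
    intro x hx k
    have hxd : x ∈ desc (X' : Set (Fin n → Fin q)) :=
      fun k' => ⟨x, Finset.mem_coe.mpr hx, rfl⟩
    rw [← heq] at hxd
    obtain ⟨y, hy, hxy⟩ := hxd k
    exact ⟨y, Finset.mem_coe.mp hy, hxy⟩
  have hX1 : X.card = 1 ∨ X.card = 2 := by
    have := Finset.card_pos.mpr hXne; omega
  have hX'1 : X'.card = 1 ∨ X'.card = 2 := by
    have := Finset.card_pos.mpr hX'ne; omega
  rcases hX1 with h1 | h2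
  · obtain ⟨a, rfl⟩ := Finset.card_eq_one.mp h1
    rcases hX'1 with h1' | h2'
    · obtain ⟨c, rfl⟩ := Finset.card_eq_one.mp h1'
      apply hne
      have hac : a = c := funext fun k => by
        obtain ⟨y, hy, h⟩ := hmemX a (by simp) k
        rw [Finset.mem_singleton] at hy; rw [h, hy]
      rw [hac]
    · obtain ⟨c, d, hcd, rfl⟩ := Finset.card_eq_two.mp h2'
      have hca : c = a := funext fun k => by
        obtain ⟨y, hy, h⟩ := hmemX' c (by simp) k
        rw [Finset.mem_singleton] at hy; rw [h, hy]
      have hda : d = a := funext fun k => by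
        obtain ⟨y, hy, h⟩ := hmemX' d (by simp) k
        rw [Finset.mem_singleton] at hy; rw [h, hy]
      exact hcd (hca.trans hda.symm)
  · obtain ⟨a, b, hab, rfl⟩ := Finset.card_eq_two.mp h2
    rcases hX'1 with h1' | h2'
    · obtain ⟨c, rfl⟩ := Finset.card_eq_one.mp h1'
      have hac : a = c := funext fun k => by
        obtain ⟨y, hy, h⟩ := hmemX a (by simp) k
        rw [Finset.mem_singleton] at hy; rw [h, hy]
      have hbc : b = c := funext fun k => by
        obtain ⟨y, hy, h⟩ := hmemX b (by simp) k
        rw [Finset.mem_singleton] at hy; rw [h, hy]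
      exact hab (hac.trans hbc.symm)
    · obtain ⟨c, d, hcd, rfl⟩ := Finset.card_eq_two.mp h2'
      have hcol : ∀ x ∈ (insert c {d} : Finset (Fin n → Fin q)), ∀ k,
          x k = a k ∨ x k = b k := by
        intro x hx k
        obtain ⟨y, hy, h⟩ := hmemX' x hx k
        rcases Finset.mem_insert.mp hy with rfl | hy'
        · exact Or.inl h
        · rw [Finset.mem_singleton] at hy'; subst hy'; exact Or.inr h
      have hcol' : ∀ x ∈ (insert a {b} : Finset (Fin n → Fin q)), ∀ k,
          x k = c k ∨ x k = d k := by
        intro x hx k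
        obtain ⟨y, hy, h⟩ := hmemX x hx k
        rcases Finset.mem_insert.mp hy with rfl | hy'
        · exact Or.inl h
        · rw [Finset.mem_singleton] at hy'; subst hy'; exact Or.inr h
      have hc := hcol c (by simp)
      have hd := hcol d (by simp)
      have ha := hcol' a (by simp)
      have hb := hcol' b (by simp)
      by_cases hca : c = a
      · subst hca
        apply hne
        have hdb : d = b := funext fun k => by
          rcases hd k with h1 | h1
          · rcases hb k with h2 | h2
            · rw [h1, h2]
            · exact h2.symm
          · exact h1
        rw [hdb]
      · by_cases hcb : c = b
        · subst hcb
          apply hne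
          have hda : d = a := funext fun k => by
            rcases hd k with h1 | h1
            · exact h1
            · rcases ha k with h2 | h2
              · rw [h1, h2]
              · exact h2.symm
          rw [hda]
          exact Finset.pair_comm a c
        · exact hC a (hXC (by simp)) b (hXC (by simp)) c (hX'C (by simp)) d (hX'C (by simp))
            ⟨hca, hcb, hc, hd, ha, hb⟩


end SepAux


open SepAux in
theorem separable2_asymptotic_lower_bound (n : ℕ) (hn : 2 ≤ n) :
    ∃ κ : ℝ, 0 < κ ∧ ∃ Q : ℕ, ∀ q : ℕ, Q ≤ q →
      ∃ C : Finset (Fin n → Fin q),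
        (∀ X X' : Finset (Fin n → Fin q), X ⊆ C → X' ⊆ C →
          X.Nonempty → X'.Nonempty → X.card ≤ 2 → X'.card ≤ 2 → X ≠ X' →
          desc (X : Set (Fin n → Fin q)) ≠ desc (X' : Set (Fin n → Fin q))) ∧
        κ * (q : ℝ) ^ ((2 * n : ℝ) / 3) ≤ C.card := by
  classical
  refine ⟨1 / 2 ^ (n + 2), by positivity, 2 ^ (3 * n), ?_⟩
  intro q hq
  have hq1 : 1 ≤ q := le_trans Nat.one_le_two_pow hq
  have hq1R : (1 : ℝ) ≤ (q : ℝ) := by exact_mod_cast hq1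
  have hqQR : ((2 : ℝ)) ^ (3 * n) ≤ (q : ℝ) := by exact_mod_cast hq
  set r : ℝ := (q : ℝ) ^ ((2 * n : ℝ) / 3) with hr
  have hrq : (q : ℝ) ≤ r := by
    have h1 : (1 : ℝ) ≤ (2 * n : ℝ) / 3 := by
      have : (2 : ℝ) ≤ (n : ℝ) := by exact_mod_cast hn
      linarith
    have := Real.rpow_le_rpow_of_exponent_le hq1R h1
    rwa [Real.rpow_one] at this
  have hrpos : 0 < r := lt_of_lt_of_le (by linarith) hrq
  have hrN : r ≤ (q : ℝ) ^ n := by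
    have h1 : (2 * n : ℝ) / 3 ≤ (n : ℝ) := by
      have : (0 : ℝ) ≤ (n : ℝ) := by positivity
      linarith
    have h2 := Real.rpow_le_rpow_of_exponent_le hq1R h1
    rw [Real.rpow_natCast] at h2
    rw [hr]
    exact h2
  set M := ⌊r / 2 ^ n⌋₊ with hM
  have h2npos : (0 : ℝ) < 2 ^ n := by positivity
  have hM_le : (M : ℝ) ≤ r / 2 ^ n := Nat.floor_le (by positivity)
  have hM_gt : r / 2 ^ n - 1 < (M : ℝ) := by
    have := Nat.lt_floor_add_one (r / 2 ^ n)
    rw [← hM] at this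
    linarith
  have hr2n1 : (2 : ℝ) ^ (n + 1) ≤ r := by
    calc (2 : ℝ) ^ (n + 1) ≤ (2 : ℝ) ^ (3 * n) := by
          apply pow_le_pow_right₀ (by norm_num) (by omega)
      _ ≤ (q : ℝ) := hqQR
      _ ≤ r := hrq
  have hMhalf : r / 2 ^ (n + 1) ≤ (M : ℝ) := by
    have h1 : (1 : ℝ) ≤ r / 2 ^ (n + 1) := (one_le_div (by positivity)).2 hr2n1
    have h2 : r / 2 ^ n = 2 * (r / 2 ^ (n + 1)) := by
      rw [pow_succ]
      field_simp
    linarith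
  have hM4 : 4 ≤ M := by
    apply Nat.le_floor
    have h1 : (4 : ℝ) * 2 ^ n ≤ r := by
      have e1 : (4 : ℝ) * 2 ^ n = 2 ^ (n + 2) := by rw [pow_succ, pow_succ]; ring
      rw [e1]
      calc (2 : ℝ) ^ (n + 2) ≤ (2 : ℝ) ^ (3 * n) := by
            apply pow_le_pow_right₀ (by norm_num) (by omega)
        _ ≤ (q : ℝ) := hqQR
        _ ≤ r := hrq
    rw [le_div_iff₀ h2npos]
    push_cast
    linarith
  have hM1 : 1 ≤ M := by omega
  have hI1 : 4 * M ≤ q ^ n := by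
    have hR : ((4 * M : ℕ) : ℝ) ≤ ((q ^ n : ℕ) : ℝ) := by
      push_cast
      have h4 : (4 : ℝ) ≤ 2 ^ n := by
        calc (4 : ℝ) = 2 ^ 2 := by norm_num
          _ ≤ 2 ^ n := pow_le_pow_right₀ (by norm_num) hn
      have hdivpos : (0 : ℝ) ≤ r / 2 ^ n := by positivity
      calc (4 : ℝ) * (M : ℝ) ≤ 4 * (r / 2 ^ n) := by linarith
        _ ≤ 2 ^ n * (r / 2 ^ n) := mul_le_mul_of_nonneg_right h4 hdivpos
        _ = r := by field_simp
        _ ≤ (q : ℝ) ^ n := hrN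
    exact_mod_cast hR
  have hI2 : 4 * (2 ^ n * M ^ 3) ≤ (q ^ n) ^ 2 := by
    have hr3 : r ^ (3 : ℕ) = ((q : ℝ) ^ n) ^ 2 := by
      rw [hr, ← Real.rpow_natCast ((q : ℝ) ^ ((2 * n : ℝ) / 3)) 3,
        ← Real.rpow_mul (by positivity)]
      have e1 : (2 * n : ℝ) / 3 * (3 : ℕ) = ((2 * n : ℕ) : ℝ) := by
        push_cast
        ring
      rw [e1, Real.rpow_natCast]
      rw [show 2 * n = n * 2 from by ring, pow_mul]
    have hR : ((4 * (2 ^ n * M ^ 3) : ℕ) : ℝ) ≤ (((q ^ n) ^ 2 : ℕ) : ℝ) := by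
      push_cast
      have hM3 : (M : ℝ) ^ 3 ≤ (r / 2 ^ n) ^ 3 := by
        apply pow_le_pow_left₀ (by positivity) hM_le
      have h4 : (4 : ℝ) ≤ (2 ^ n) ^ 2 := by
        calc (4 : ℝ) = 2 ^ 2 := by norm_num
          _ ≤ 2 ^ (n * 2) := pow_le_pow_right₀ (by norm_num) (by omega)
          _ = (2 ^ n) ^ 2 := by rw [pow_mul]
      have key : (4 : ℝ) * (2 ^ n * (r / 2 ^ n) ^ 3) ≤ ((q : ℝ) ^ n) ^ 2 := by
        rw [div_pow, ← hr3]
        have e2 : (4 : ℝ) * (2 ^ n * (r ^ 3 / (2 ^ n) ^ 3)) = 4 / (2 ^ n) ^ 2 * r ^ 3 := by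
          field_simp
        rw [e2]
        have h5 : (0 : ℝ) < ((2 : ℝ) ^ n) ^ 2 := by positivity
        have h6 : (4 : ℝ) / (2 ^ n) ^ 2 ≤ 1 := (div_le_one h5).2 h4
        calc (4 : ℝ) / (2 ^ n) ^ 2 * r ^ 3 ≤ 1 * r ^ 3 :=
              mul_le_mul_of_nonneg_right h6 (le_of_lt (pow_pos hrpos 3))
          _ = r ^ 3 := by ring
      calc (4 : ℝ) * (2 ^ n * (M : ℝ) ^ 3) ≤ 4 * (2 ^ n * (r / 2 ^ n) ^ 3) := by
            have : (0:ℝ) < 2 ^ n := h2npos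
            nlinarith [hM3]
        _ ≤ ((q : ℝ) ^ n) ^ 2 := key
    exact_mod_cast hR
  obtain ⟨C, hnoBad, hMC⟩ := exists_code (n := n) (q := q) hM1 hq1 hI1 hI2
  refine ⟨C, ?_, ?_⟩
  · intro X X' hXC hX'C hXne hX'ne hX2 hX'2 hne
    exact sep_of_noBad hnoBad hXC hX'C hXne hX'ne hX2 hX'2 hne
  · have hCM : (M : ℝ) ≤ 2 * (C.card : ℝ) := by exact_mod_cast hMC
    have e4 : (1 : ℝ) / 2 ^ (n + 2) * r = (r / 2 ^ (n + 1)) / 2 := by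
      rw [pow_succ]
      field_simp
    calc (1 : ℝ) / 2 ^ (n + 2) * r = (r / 2 ^ (n + 1)) / 2 := e4
      _ ≤ (M : ℝ) / 2 := by
          have h2pos : (0 : ℝ) < 2 := by norm_num
          exact (div_le_div_iff_of_pos_right h2pos).2 hMhalf
      _ ≤ (C.card : ℝ) := by linarith
end

section
/- Let A, B, B' be disjoint finite index sets and let c_i, i ∈ A ∪ B ∪ B', be independent uniform random words in F^n with |F| = q. Set X = {c_i : i ∈ A ∪ B} and X' = {c_i : i ∈ A ∪ B'}. Then the probability that desc(X) = desc(X') is at most ((|A| + |B'|)/q)^{|B| n}. -/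
theorem prob_desc_eq_bound {F : Type*} [Fintype F] {q n : ℕ}
    (hq : 2 ≤ q) (hn : 1 ≤ n) (hF : Fintype.card F = q)
    {ι : Type*} [Fintype ι] [DecidableEq ι]
    (A B B' : Finset ι) (hAB : Disjoint A B) (hAB' : Disjoint A B')
    (hBB' : Disjoint B B') (hB : B.Nonempty) :
    (Nat.card {ω : ι → Fin n → F //
        desc (ω '' ↑(A ∪ B)) = desc (ω '' ↑(A ∪ B'))} : ℝ)
      ≤ ((A.card + B'.card : ℝ) / (q : ℝ)) ^ (B.card * n)
        * Fintype.card (ι → Fin n → F) := by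
  classical
  have key : ∀ (ω : ι → Fin n → F),
      desc (ω '' ↑(A ∪ B)) = desc (ω '' ↑(A ∪ B')) →
      ∀ i ∈ B, ∀ k : Fin n, ∃ j ∈ A ∪ B', ω i k = ω j k := by
    intro ω hω i hi k
    have h1 : ω i ∈ desc (ω '' ↑(A ∪ B)) := by
      intro k
      exact ⟨ω i, ⟨i, by simp [hi], rfl⟩, rfl⟩
    rw [hω] at h1
    obtain ⟨x, ⟨j, hj, rfl⟩, hx⟩ := h1 k
    exact ⟨j, by simpa using hj, hx⟩
  set E := {ω : ι → Fin n → F //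
      desc (ω '' ↑(A ∪ B)) = desc (ω '' ↑(A ∪ B'))} with hE
  let T := ({i : ι // i ∉ B} → Fin n → F) × (↥B → Fin n → ↥(A ∪ B'))
  let f : E → T := fun ω =>
    ⟨fun i k => ω.1 i.1 k,
     fun i k => ⟨(key ω.1 ω.2 i.1 i.2 k).choose,
       (key ω.1 ω.2 i.1 i.2 k).choose_spec.1⟩⟩
  have hf : Function.Injective f := by
    intro ω₁ ω₂ h
    have h1 := congrArg Prod.fst h
    have h2 := congrArg Prod.snd h
    ext i k
    by_cases hi : i ∈ B
    · obtain ⟨hj1, hv1⟩ := (key ω₁.1 ω₁.2 i hi k).choose_spec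
      obtain ⟨hj2, hv2⟩ := (key ω₂.1 ω₂.2 i hi k).choose_spec
      have hjj : (key ω₁.1 ω₁.2 i hi k).choose = (key ω₂.1 ω₂.2 i hi k).choose :=
        congrArg Subtype.val (congrFun (congrFun h2 ⟨i, hi⟩) k)
      have hjB : (key ω₁.1 ω₁.2 i hi k).choose ∉ B := by
        intro hjB
        rcases Finset.mem_union.1 hj1 with hh | hh
        · exact (Finset.disjoint_left.1 hAB hh) hjB
        · exact (Finset.disjoint_left.1 hBB' hjB) hh
      have hval : ω₁.1 (key ω₁.1 ω₁.2 i hi k).choose k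
          = ω₂.1 (key ω₁.1 ω₁.2 i hi k).choose k :=
        congrFun (congrFun h1 ⟨_, hjB⟩) k
      rw [hv1, hval, hjj, ← hv2]
    · exact congrFun (congrFun h1 ⟨i, hi⟩) k
  have hcard : Nat.card E ≤ Nat.card T := Nat.card_le_card_of_injective f hf
  have hAB'card : Fintype.card ↥(A ∪ B') = A.card + B'.card := by
    rw [Fintype.card_coe, Finset.card_union_of_disjoint hAB']
  have hcompl : Fintype.card {i : ι // i ∉ B} = Fintype.card ι - B.card := by
    rw [Fintype.card_subtype_compl, Fintype.card_coe]
  have hT : Nat.card T =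
      (q ^ n) ^ (Fintype.card ι - B.card) * ((A.card + B'.card) ^ n) ^ B.card := by
    rw [Nat.card_eq_fintype_card]
    show Fintype.card (({i : ι // i ∉ B} → Fin n → F) × (↥B → Fin n → ↥(A ∪ B'))) = _
    rw [Fintype.card_prod, Fintype.card_fun, Fintype.card_fun, Fintype.card_fun,
      Fintype.card_fun, Fintype.card_fin, hF, hAB'card, hcompl, Fintype.card_coe]
  have hbN : B.card ≤ Fintype.card ι := Finset.card_le_univ B
  have hsum : n * (Fintype.card ι - B.card) + n * B.card = n * Fintype.card ι := by
    rw [← Nat.mul_add, Nat.sub_add_cancel hbN]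
  have hq0 : (0:ℝ) < q := by exact_mod_cast (by omega : 0 < q)
  have hcf : Fintype.card (ι → Fin n → F) = (q ^ n) ^ Fintype.card ι := by
    rw [Fintype.card_fun, Fintype.card_fun, Fintype.card_fin, hF]
  calc (Nat.card E : ℝ) ≤ (Nat.card T : ℝ) := by exact_mod_cast hcard
    _ = (q:ℝ) ^ (n * (Fintype.card ι - B.card))
        * ((A.card : ℝ) + B'.card) ^ (n * B.card) := by
        rw [hT]; push_cast [pow_mul]; ring
    _ = ((A.card + B'.card : ℝ) / q) ^ (B.card * n)
        * Fintype.card (ι → Fin n → F) := by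
        rw [hcf, div_pow]
        push_cast [← pow_mul, ← hsum, pow_add, Nat.mul_comm B.card n]
        field_simp
end

section
/- Let t ≥ 3, n ≥ 2, q ≥ 2. Let A, {j}, {j'} be disjoint index sets with |A| = t−1, and let all words c_i (i ∈ A ∪ {j, j'}) be independent uniform random elements of F^n, |F| = q ≥ (t−1)². Set X = {c_i : i ∈ A} ∪ {c_j} and X' = {c_i : i ∈ A} ∪ {c_{j'}}. Then the probability that c_j and c_{j'} agree in fewer than n/(t−1) components and desc(X) = desc(X') is less than (2t)^{2n} · q^{−(2 − 1/(t−1))n}. -/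
open Finset

noncomputable def pickA {ι : Type*} (A : Finset ι) {p : ι → Prop} (h : ∃ i ∈ A, p i) : ↥A :=
  ⟨h.choose, h.choose_spec.1⟩

lemma pickA_spec {ι : Type*} (A : Finset ι) {p : ι → Prop} (h : ∃ i ∈ A, p i) :
    p ↑(pickA A h) := h.choose_spec.2

lemma count_Q {F : Type*} [Fintype F] {n : ℕ} {ι : Type*} [Fintype ι] [DecidableEq ι]
    (A : Finset ι) (j j' : ι) (hj : j ∉ A) (hj' : j' ∉ A) (hjj' : j ≠ j') (S : Finset (Fin n)) :
    Nat.card {ω : ι → Fin n → F // (∀ k ∈ S, ω j k = ω j' k) ∧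
      ∀ k ∉ S, (∃ i ∈ A, ω i k = ω j k) ∧ (∃ i ∈ A, ω i k = ω j' k)} ≤
    Fintype.card F ^ ((Fintype.card ι - 2) * n + S.card) * (A.card ^ 2) ^ (n - S.card) := by
  classical
  set B : Finset ι := ({j, j'} : Finset ι)ᶜ with hB
  have hmemB : ∀ i ∈ A, i ∈ B := by
    intro i hi
    simp only [hB, Finset.mem_compl, Finset.mem_insert, Finset.mem_singleton]
    rintro (rfl | rfl) <;> [exact hj hi; exact hj' hi]
  set T := ((↥B → Fin n → F) × (↥S → F) × (↥Sᶜ → ↥A × ↥A)) with hT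
  set f : {ω : ι → Fin n → F // (∀ k ∈ S, ω j k = ω j' k) ∧
      ∀ k ∉ S, (∃ i ∈ A, ω i k = ω j k) ∧ (∃ i ∈ A, ω i k = ω j' k)} → T :=
    fun ω => ⟨fun i k => ω.1 i k, fun k => ω.1 j k,
      fun k => (pickA A (ω.2.2 k (Finset.mem_compl.mp k.2)).1,
                pickA A (ω.2.2 k (Finset.mem_compl.mp k.2)).2)⟩ with hf
  have hinj : Function.Injective f := by
    intro a b hab
    have h1 := congrArg Prod.fst hab
    have h2 := congrArg (fun x => x.2.1) hab
    have h3 := congrArg (fun x => x.2.2) hab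
    simp only [hf] at h1 h2 h3
    apply Subtype.ext
    funext i k
    by_cases hij : i = j ∨ i = j'
    · by_cases hk : k ∈ S
      · have hek := congrFun h2 ⟨k, hk⟩
        rcases hij with rfl | rfl
        · exact hek
        · rw [← a.2.1 k hk, ← b.2.1 k hk]; exact hek
      · have hk' : k ∈ Sᶜ := Finset.mem_compl.mpr hk
        have h3k := congrFun h3 ⟨k, hk'⟩
        have recov : ∀ (c : {ω : ι → Fin n → F // (∀ k ∈ S, ω j k = ω j' k) ∧
            ∀ k ∉ S, (∃ i ∈ A, ω i k = ω j k) ∧ (∃ i ∈ A, ω i k = ω j' k)})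
            (pa : ↥A), c.1 j k = c.1 ↑pa k →
            (∀ (i' : ↥B), a.1 ↑i' k = b.1 ↑i' k) → True := fun _ _ _ _ => trivial
        have hBeq : ∀ (i' : ι), i' ∈ B → a.1 i' k = b.1 i' k := by
          intro i' hi'
          exact congrFun (congrFun h1 ⟨i', hi'⟩) k
        rcases hij with rfl | rfl
        · have e1 : pickA A (a.2.2 k (Finset.mem_compl.mp (⟨k, hk'⟩ : ↥Sᶜ).2)).1
              = pickA A (b.2.2 k (Finset.mem_compl.mp (⟨k, hk'⟩ : ↥Sᶜ).2)).1 :=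
            congrArg Prod.fst h3k
          have sa := pickA_spec A (a.2.2 k (Finset.mem_compl.mp (⟨k, hk'⟩ : ↥Sᶜ).2)).1
          have sb := pickA_spec A (b.2.2 k (Finset.mem_compl.mp (⟨k, hk'⟩ : ↥Sᶜ).2)).1
          rw [← sa, ← sb, ← e1]
          exact hBeq _ (hmemB _ (pickA A (a.2.2 k (Finset.mem_compl.mp (⟨k, hk'⟩ : ↥Sᶜ).2)).1).2)
        · have e1 : pickA A (a.2.2 k (Finset.mem_compl.mp (⟨k, hk'⟩ : ↥Sᶜ).2)).2
              = pickA A (b.2.2 k (Finset.mem_compl.mp (⟨k, hk'⟩ : ↥Sᶜ).2)).2 :=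
            congrArg Prod.snd h3k
          have sa := pickA_spec A (a.2.2 k (Finset.mem_compl.mp (⟨k, hk'⟩ : ↥Sᶜ).2)).2
          have sb := pickA_spec A (b.2.2 k (Finset.mem_compl.mp (⟨k, hk'⟩ : ↥Sᶜ).2)).2
          rw [← sa, ← sb, ← e1]
          exact hBeq _ (hmemB _ (pickA A (a.2.2 k (Finset.mem_compl.mp (⟨k, hk'⟩ : ↥Sᶜ).2)).2).2)
    · push_neg at hij
      have : i ∈ B := by
        simp only [hB, Finset.mem_compl, Finset.mem_insert, Finset.mem_singleton]
        rintro (rfl | rfl) <;> [exact hij.1 rfl; exact hij.2 rfl]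
      exact congrFun (congrFun h1 ⟨i, this⟩) k
  have hcard := Nat.card_le_card_of_injective f hinj
  have hcardT : Nat.card T =
      Fintype.card F ^ ((Fintype.card ι - 2) * n + S.card) * (A.card ^ 2) ^ (n - S.card) := by
    rw [Nat.card_eq_fintype_card]
    simp only [hT, hB, Fintype.card_prod, Fintype.card_fun, Fintype.card_coe, Fintype.card_fin,
      Finset.card_compl, Finset.card_pair hjj']
    ring
  calc Nat.card _ ≤ Nat.card T := hcard
    _ = _ := hcardT


lemma desc_pointwise {F : Type*} {n : ℕ} {ι : Type*} {A : Finset ι} {j j' : ι}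
    {ω : ι → Fin n → F}
    (hd : desc (ω '' ↑A ∪ {ω j}) = desc (ω '' ↑A ∪ {ω j'})) (k : Fin n)
    (hne : ω j k ≠ ω j' k) :
    (∃ i ∈ A, ω i k = ω j k) ∧ (∃ i ∈ A, ω i k = ω j' k) := by
  have hmem : ∀ (u v : ι), ω u ∈ desc (ω '' ↑A ∪ {ω v}) →
      ω u k = ω v k ∨ ∃ i ∈ A, ω i k = ω u k := by
    intro u v hu
    obtain ⟨x, hx, hxk⟩ := hu k
    rcases hx with ⟨i, hiA, rfl⟩ | hx
    · exact Or.inr ⟨i, hiA, hxk.symm⟩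
    · rw [Set.mem_singleton_iff] at hx
      subst hx
      exact Or.inl hxk
  have hjmem : ω j ∈ desc (ω '' ↑A ∪ {ω j'}) := by
    rw [← hd]; intro k'; exact ⟨ω j, Or.inr rfl, rfl⟩
  have hj'mem : ω j' ∈ desc (ω '' ↑A ∪ {ω j}) := by
    rw [hd]; intro k'; exact ⟨ω j', Or.inr rfl, rfl⟩
  constructor
  · rcases hmem j j' hjmem with h | h
    · exact absurd h hne
    · exact h
  · rcases hmem j' j hj'mem with h | h
    · exact absurd h.symm hne
    · exact h

theorem prob_G_event_bound {F : Type*} [Fintype F] {q n t : ℕ}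
    (hn : 2 ≤ n) (ht : 3 ≤ t) (hF : Fintype.card F = q) (hq : (t - 1) ^ 2 ≤ q)
    {ι : Type*} [Fintype ι] [DecidableEq ι]
    (A : Finset ι) (j j' : ι) (hj : j ∉ A) (hj' : j' ∉ A) (hjj' : j ≠ j')
    (hA : A.card = t - 1) :
    (Nat.card {ω : ι → Fin n → F //
        (Nat.card {k : Fin n // ω j k = ω j' k} : ℝ) < (n : ℝ) / ((t : ℝ) - 1) ∧
        desc (ω '' ↑A ∪ {ω j}) = desc (ω '' ↑A ∪ {ω j'})} : ℝ)
      < (2 * (t : ℝ)) ^ (2 * n) * (q : ℝ) ^ (-(2 - 1 / ((t : ℝ) - 1)) * n)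
        * Fintype.card (ι → Fin n → F) := by
  classical
  have ht1 : (2:ℝ) ≤ (t:ℝ) - 1 := by
    have : (3:ℝ) ≤ (t:ℝ) := by exact_mod_cast ht
    linarith
  have hq4 : 4 ≤ q := by
    have h22 : 2 ^ 2 ≤ (t - 1) ^ 2 := Nat.pow_le_pow_left (by omega) 2
    omega
  have hq1 : (1:ℝ) < (q:ℝ) := by exact_mod_cast (by omega : 1 < q)
  have hq0 : (0:ℝ) < (q:ℝ) := by linarith
  set m := Fintype.card ι with hmdef
  have hm : 2 ≤ m := by
    rw [hmdef]
    simpa [Finset.card_pair hjj'] using Finset.card_le_univ ({j, j'} : Finset ι)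
  set P : (ι → Fin n → F) → Prop := fun ω =>
    (Nat.card {k : Fin n // ω j k = ω j' k} : ℝ) < (n : ℝ) / ((t : ℝ) - 1) ∧
    desc (ω '' ↑A ∪ {ω j}) = desc (ω '' ↑A ∪ {ω j'}) with hPdef
  set Q : Finset (Fin n) → (ι → Fin n → F) → Prop := fun S ω =>
    (∀ k ∈ S, ω j k = ω j' k) ∧
      ∀ k ∉ S, (∃ i ∈ A, ω i k = ω j k) ∧ (∃ i ∈ A, ω i k = ω j' k) with hQdef
  set 𝒮 : Finset (Finset (Fin n)) :=
    Finset.univ.filter (fun S => (S.card : ℝ) < (n : ℝ) / ((t : ℝ) - 1)) with h𝒮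
  -- the union bound in ℕ
  have hstep1 : Nat.card {ω : ι → Fin n → F // P ω} ≤
      ∑ S ∈ 𝒮, Nat.card {ω : ι → Fin n → F // Q S ω} := by
    have e1 : Nat.card {ω : ι → Fin n → F // P ω} = (Finset.univ.filter P).card := by
      rw [Nat.card_eq_fintype_card, Fintype.card_subtype]
    have e2 : ∀ S, Nat.card {ω : ι → Fin n → F // Q S ω}
        = (Finset.univ.filter (Q S)).card := by
      intro S
      rw [Nat.card_eq_fintype_card, Fintype.card_subtype]
    rw [e1]
    calc (Finset.univ.filter P).card
        ≤ (𝒮.biUnion (fun S => Finset.univ.filter (Q S))).card := by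
          apply Finset.card_le_card
          intro ω hω
          rw [Finset.mem_filter] at hω
          obtain ⟨-, hP1, hP2⟩ := hω
          set S₀ : Finset (Fin n) := Finset.univ.filter (fun k => ω j k = ω j' k) with hS₀
          have hcardS₀ : S₀.card = Nat.card {k : Fin n // ω j k = ω j' k} := by
            rw [Nat.card_eq_fintype_card, Fintype.card_subtype]
          rw [Finset.mem_biUnion]
          refine ⟨S₀, ?_, ?_⟩
          · rw [h𝒮, Finset.mem_filter]
            exact ⟨Finset.mem_univ _, by rw [hcardS₀]; exact hP1⟩
          · rw [Finset.mem_filter]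
            refine ⟨Finset.mem_univ _, ?_, ?_⟩
            · intro k hk
              simpa [hS₀] using hk
            · intro k hk
              have hne : ω j k ≠ ω j' k := by simpa [hS₀] using hk
              exact desc_pointwise hP2 k hne
      _ ≤ ∑ S ∈ 𝒮, (Finset.univ.filter (Q S)).card := Finset.card_biUnion_le
      _ = ∑ S ∈ 𝒮, Nat.card {ω : ι → Fin n → F // Q S ω} := by
          exact Finset.sum_congr rfl (fun S _ => (e2 S).symm)
  have hstep2 : ∀ S : Finset (Fin n), Nat.card {ω : ι → Fin n → F // Q S ω} ≤
      q ^ ((m - 2) * n + S.card) * ((t - 1) ^ 2) ^ (n - S.card) := by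
    intro S
    have := count_Q (F := F) A j j' hj hj' hjj' S
    rwa [hF, hA, ← hmdef] at this
  -- pass to ℝ
  set R : ℝ := (q : ℝ) ^ (-(2 - 1 / ((t : ℝ) - 1)) * (n:ℝ)) with hR
  have hRpos : 0 < R := Real.rpow_pos_of_pos hq0 _
  set Bd : ℝ := ((t:ℝ) - 1) ^ (2 * n) * (R * (q:ℝ) ^ (m * n)) with hBd
  have hBdpos : 0 < Bd := by
    apply mul_pos (by positivity) (mul_pos hRpos (by positivity))
  have hterm : ∀ S ∈ 𝒮,
      ((q ^ ((m - 2) * n + S.card) * ((t - 1) ^ 2) ^ (n - S.card) : ℕ) : ℝ) ≤ Bd := by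
    intro S hS
    have hScard : (S.card : ℝ) < (n : ℝ) / ((t : ℝ) - 1) := by
      rw [h𝒮, Finset.mem_filter] at hS
      exact hS.2
    have hcast : ((t - 1 : ℕ) : ℝ) = (t:ℝ) - 1 := by
      rw [Nat.cast_sub (by omega : 1 ≤ t), Nat.cast_one]
    have hLHS : ((q ^ ((m - 2) * n + S.card) * ((t - 1) ^ 2) ^ (n - S.card) : ℕ) : ℝ)
        = (q:ℝ) ^ ((m - 2) * n + S.card) * ((t:ℝ) - 1) ^ (2 * (n - S.card)) := by
      push_cast [hcast]
      rw [← pow_mul]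
    rw [hLHS]
    have hb1 : ((t:ℝ) - 1) ^ (2 * (n - S.card)) ≤ ((t:ℝ) - 1) ^ (2 * n) :=
      pow_le_pow_right₀ (by linarith) (by omega)
    have hb2 : (q:ℝ) ^ ((m - 2) * n + S.card) ≤ R * (q:ℝ) ^ (m * n) := by
      rw [hR, show (q:ℝ) ^ ((m - 2) * n + S.card)
            = (q:ℝ) ^ ((((m - 2) * n + S.card : ℕ)) : ℝ) from (Real.rpow_natCast _ _).symm,
          show (q:ℝ) ^ (m * n) = (q:ℝ) ^ (((m * n : ℕ)) : ℝ) from (Real.rpow_natCast _ _).symm,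
          ← Real.rpow_add hq0]
      apply Real.rpow_le_rpow_of_exponent_le hq1.le
      have hm2 : m - 2 + 2 = m := by omega
      have hmn : (m * n : ℕ) = (m - 2) * n + 2 * n := by
        conv_lhs => rw [← hm2]
        ring
      rw [hmn]
      push_cast
      have ht0 : (0:ℝ) < (t:ℝ) - 1 := by linarith
      have hdiv : (1 / ((t:ℝ) - 1)) * (n:ℝ) = (n:ℝ) / ((t:ℝ) - 1) := by ring
      nlinarith [hScard]
    calc (q:ℝ) ^ ((m - 2) * n + S.card) * ((t:ℝ) - 1) ^ (2 * (n - S.card))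
        ≤ (R * (q:ℝ) ^ (m * n)) * ((t:ℝ) - 1) ^ (2 * n) := by
          apply mul_le_mul hb2 hb1 (by positivity)
          exact le_of_lt (mul_pos hRpos (by positivity))
      _ = Bd := by rw [hBd]; ring
  -- combine
  have hΩ : (Fintype.card (ι → Fin n → F) : ℝ) = (q:ℝ) ^ (m * n) := by
    rw [Fintype.card_fun, Fintype.card_fun, hF, Fintype.card_fin, ← hmdef, ← pow_mul]
    push_cast
    rw [Nat.mul_comm]
  have hmain : (Nat.card {ω : ι → Fin n → F // P ω} : ℝ) ≤ (2:ℝ) ^ n * Bd := by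
    calc (Nat.card {ω : ι → Fin n → F // P ω} : ℝ)
        ≤ ((∑ S ∈ 𝒮, q ^ ((m - 2) * n + S.card) * ((t - 1) ^ 2) ^ (n - S.card) : ℕ) : ℝ) := by
          exact_mod_cast le_trans hstep1 (Finset.sum_le_sum (fun S _ => hstep2 S))
      _ = ∑ S ∈ 𝒮, ((q ^ ((m - 2) * n + S.card) * ((t - 1) ^ 2) ^ (n - S.card) : ℕ) : ℝ) := by
          push_cast; rfl
      _ ≤ 𝒮.card • Bd := Finset.sum_le_card_nsmul _ _ _ hterm
      _ = (𝒮.card : ℝ) * Bd := nsmul_eq_mul _ _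
      _ ≤ (2:ℝ) ^ n * Bd := by
          apply mul_le_mul_of_nonneg_right _ hBdpos.le
          have h1 : 𝒮.card ≤ 2 ^ n := by
            calc 𝒮.card ≤ (Finset.univ : Finset (Finset (Fin n))).card :=
                  Finset.card_filter_le _ _
              _ = 2 ^ n := by rw [Finset.card_univ, Fintype.card_finset, Fintype.card_fin]
          exact_mod_cast h1
  have hkey : (2:ℝ) ^ n * ((t:ℝ) - 1) ^ (2 * n) < (2 * (t:ℝ)) ^ (2 * n) := by
    rw [mul_pow]
    have ha : ((t:ℝ) - 1) ^ (2 * n) < (t:ℝ) ^ (2 * n) :=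
      pow_lt_pow_left₀ (by linarith) (by linarith) (by omega)
    have hb : (2:ℝ) ^ n ≤ (2:ℝ) ^ (2 * n) := pow_le_pow_right₀ (by norm_num) (by omega)
    calc (2:ℝ) ^ n * ((t:ℝ) - 1) ^ (2 * n) < (2:ℝ) ^ n * (t:ℝ) ^ (2 * n) := by
          exact mul_lt_mul_of_pos_left ha (by positivity)
      _ ≤ (2:ℝ) ^ (2 * n) * (t:ℝ) ^ (2 * n) := by
          apply mul_le_mul_of_nonneg_right hb (by positivity)
  calc (Nat.card {ω : ι → Fin n → F // P ω} : ℝ)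
      ≤ (2:ℝ) ^ n * Bd := hmain
    _ = ((2:ℝ) ^ n * ((t:ℝ) - 1) ^ (2 * n)) * (R * (q:ℝ) ^ (m * n)) := by
        rw [hBd]; ring
    _ < (2 * (t:ℝ)) ^ (2 * n) * (R * (q:ℝ) ^ (m * n)) := by
        exact mul_lt_mul_of_pos_right hkey (mul_pos hRpos (by positivity))
    _ = (2 * (t : ℝ)) ^ (2 * n) * (q : ℝ) ^ (-(2 - 1 / ((t : ℝ) - 1)) * (n:ℝ))
        * Fintype.card (ι → Fin n → F) := by
        rw [hΩ, hR]; ring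
end
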